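/- arXiv:1409.0741 — 3 statements merged into one kernel-verified Lean document; each statement's English description precedes it below -/
import Mathlib

section
/- Let f : A → B be an arbitrary map between additive commutative groups and let M₀ be a finite nonempty index set. Then for every family x : M₀ → A one has f(∑_{j∈M₀} x_j) = ∑_{∅≠J⊆M₀} (∂^{|J|−1} f)((x_j)_{j∈J}), where the sum ranges over all nonempty subsets J of M₀ and (∂^{|J|−1} f) is evaluated at the family (x_j)_{j∈J} in any order (legitimate since iterated discrete derivatives are symmetric). If moreover f(0) = 0, the formula also holds for M₀ = ∅ (both sides being 0). (Discrete Taylor Expansion.) -/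
/-! Discrete Taylor Expansion. -/

/-- The iterated discrete derivative of an arbitrary map `f : A → B` between
additive commutative groups:
`∂⁰f = f` and
`(∂^q f)(x₁, …, x_{q+1}) = (∂^{q−1} f)(x₁+x₂, x₃, …) − (∂^{q−1} f)(x₁, x₃, …) − (∂^{q−1} f)(x₂, x₃, …)`. -/
def discDeriv {A B : Type*} [AddCommGroup A] [AddCommGroup B] (f : A → B) :
    (q : ℕ) → (Fin (q + 1) → A) → B
  | 0, x => f (x 0)
  | q + 1, x =>
      discDeriv f q (Fin.cons (x 0 + x 1) fun i => x i.succ.succ)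
        - discDeriv f q (Fin.cons (x 0) fun i => x i.succ.succ)
        - discDeriv f q (Fin.cons (x 1) fun i => x i.succ.succ)

section DiscTaylorAux

open Finset

private lemma neg_one_pow_add_twice (m k : ℕ) : ((-1 : ℤ)) ^ (m + k + k) = (-1) ^ m := by
  rw [pow_add, pow_add, mul_assoc, ← pow_add, ← two_mul, pow_mul]
  norm_num

private lemma neg_one_pow_plus_two (a : ℕ) : ((-1 : ℤ)) ^ (a + 2) = (-1) ^ a := by
  rw [pow_add]; norm_num

variable {A B : Type*} [AddCommGroup A] [AddCommGroup B] (f : A → B)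

/-- Reindexing a sum over the powerset of a mapped finset. -/
private lemma sum_powerset_map' {α β' : Type*} (emb : α ↪ β') (s : Finset α)
    (F : Finset β' → B) :
    ∑ T ∈ (s.map emb).powerset, F T = ∑ T ∈ s.powerset, F (T.map emb) := by
  refine (Finset.sum_nbij (fun T => T.map emb) ?_ ?_ ?_ ?_).symm
  · intro T hT
    rw [Finset.mem_powerset] at hT ⊢
    exact Finset.map_subset_map.2 hT
  · intro T1 _ T2 _ h
    exact Finset.map_injective emb h
  · intro T hT
    rw [Finset.mem_coe, Finset.mem_powerset, Finset.subset_map_iff] at hT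
    obtain ⟨u, hu, rfl⟩ := hT
    exact ⟨u, by simpa using hu, rfl⟩
  · intro T _; rfl

/-- Splitting a powerset sum over `Fin (n+1)` by whether the subset contains `0`. -/
private lemma powerset_split {n : ℕ} (g : ℕ → A → B) (z : A) (y : Fin n → A) :
    ∑ T ∈ (Finset.univ : Finset (Fin (n + 1))).powerset, g T.card (∑ i ∈ T, (Fin.cons z y : Fin (n + 1) → A) i)
      = (∑ T ∈ (Finset.univ : Finset (Fin n)).powerset, g (T.card + 1) (z + ∑ i ∈ T, y i))
        + ∑ T ∈ (Finset.univ : Finset (Fin n)).powerset, g T.card (∑ i ∈ T, y i) := by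
  have h0 : (0 : Fin (n + 1)) ∉ (Finset.univ : Finset (Fin n)).map
      ⟨Fin.succ, Fin.succ_injective _⟩ := by
    simp [Fin.succ_ne_zero]
  rw [Fin.univ_succ, Finset.cons_eq_insert, Finset.sum_powerset_insert h0,
    sum_powerset_map', sum_powerset_map', add_comm]
  congr 1
  · refine Finset.sum_congr rfl fun T _ => ?_
    have h0T : (0 : Fin (n + 1)) ∉ T.map ⟨Fin.succ, Fin.succ_injective _⟩ := by
      simp [Fin.succ_ne_zero]
    rw [Finset.sum_insert h0T, Finset.card_insert_of_notMem h0T, Finset.card_map,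
      Finset.sum_map]
    simp
  · refine Finset.sum_congr rfl fun T _ => ?_
    rw [Finset.card_map, Finset.sum_map]
    simp

private lemma powerset_split2 {n : ℕ} (g : ℕ → A → B) (x : Fin (n + 2) → A) :
    ∑ T ∈ (Finset.univ : Finset (Fin (n + 2))).powerset, g T.card (∑ i ∈ T, x i)
      = ((∑ T ∈ (Finset.univ : Finset (Fin n)).powerset,
            g (T.card + 1 + 1) (x 0 + (x 1 + ∑ i ∈ T, x i.succ.succ)))
          + ∑ T ∈ (Finset.univ : Finset (Fin n)).powerset,
              g (T.card + 1) (x 0 + ∑ i ∈ T, x i.succ.succ))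
        + ((∑ T ∈ (Finset.univ : Finset (Fin n)).powerset,
              g (T.card + 1) (x 1 + ∑ i ∈ T, x i.succ.succ))
          + ∑ T ∈ (Finset.univ : Finset (Fin n)).powerset,
              g T.card (∑ i ∈ T, x i.succ.succ)) := by
  have htail : Fin.tail x = Fin.cons (x 1) (fun i => x i.succ.succ) := by
    ext i
    induction i using Fin.cases with
    | zero => simp [Fin.tail]
    | succ j => simp [Fin.tail]
  have h1 : ∑ T ∈ (Finset.univ : Finset (Fin (n + 2))).powerset, g T.card (∑ i ∈ T, x i)
      = ∑ T ∈ (Finset.univ : Finset (Fin (n + 2))).powerset,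
          g T.card (∑ i ∈ T, (Fin.cons (x 0) (Fin.tail x) : Fin (n + 2) → A) i) := by
    rw [Fin.cons_self_tail]
  rw [h1]
  refine (powerset_split g (x 0) (Fin.tail x)).trans ?_
  congr 1
  · rw [htail]
    exact powerset_split (fun k v => g (k + 1) (x 0 + v)) (x 1) (fun i => x i.succ.succ)
  · rw [htail]
    exact powerset_split g (x 1) (fun i => x i.succ.succ)

/-- Closed form for the iterated discrete derivative. -/
private lemma discDeriv_eq_sum (q : ℕ) (x : Fin (q + 1) → A) :
    discDeriv f q x
      = ∑ T ∈ (Finset.univ : Finset (Fin (q + 1))).powerset,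
          (if T.card = 0 then 0 else ((-1 : ℤ)) ^ (q + 1 + T.card) • f (∑ i ∈ T, x i)) := by
  induction q with
  | zero =>
    have huniv : (Finset.univ : Finset (Fin 1)).powerset
        = insert ∅ {({0} : Finset (Fin 1))} := rfl
    rw [huniv, Finset.sum_insert (by decide), Finset.sum_singleton]
    simp [discDeriv]
  | succ q ih =>
    have hsplit : ∀ z : A,
        (∑ T ∈ (Finset.univ : Finset (Fin (q + 1))).powerset,
            (if T.card = 0 then 0 else
              ((-1 : ℤ)) ^ (q + 1 + T.card) • f (∑ i ∈ T, (Fin.cons z (fun i => x i.succ.succ) : Fin (q + 1) → A) i)))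
          = (∑ T ∈ (Finset.univ : Finset (Fin q)).powerset,
                ((-1 : ℤ)) ^ (q + T.card) • f (z + ∑ i ∈ T, x i.succ.succ))
            + ∑ T ∈ (Finset.univ : Finset (Fin q)).powerset,
                (if T.card = 0 then 0 else
                  ((-1 : ℤ)) ^ (q + 1 + T.card) • f (∑ i ∈ T, x i.succ.succ)) := by
      intro z
      refine (powerset_split
        (fun k v => if k = 0 then (0 : B) else ((-1 : ℤ)) ^ (q + 1 + k) • f v) z
        (fun i => x i.succ.succ)).trans ?_
      congr 1
      refine Finset.sum_congr rfl fun T _ => ?_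
      show (if T.card + 1 = 0 then (0 : B) else
          ((-1 : ℤ)) ^ (q + 1 + (T.card + 1)) • f (z + ∑ i ∈ T, x i.succ.succ)) = _
      rw [if_neg (Nat.succ_ne_zero _)]
      congr 1
      rw [show q + 1 + (T.card + 1) = q + T.card + 2 by omega, neg_one_pow_plus_two]
    have hstep : discDeriv f (q + 1) x
        = discDeriv f q (Fin.cons (x 0 + x 1) fun i => x i.succ.succ)
          - discDeriv f q (Fin.cons (x 0) fun i => x i.succ.succ)
          - discDeriv f q (Fin.cons (x 1) fun i => x i.succ.succ) := rfl
    rw [hstep, ih, ih, ih, hsplit, hsplit, hsplit]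
    have hbig : (∑ T ∈ (Finset.univ : Finset (Fin (q + 1 + 1))).powerset,
          (if T.card = 0 then 0 else
            ((-1 : ℤ)) ^ (q + 1 + 1 + T.card) • f (∑ i ∈ T, x i)))
        = ((∑ T ∈ (Finset.univ : Finset (Fin q)).powerset,
              (if T.card + 1 + 1 = 0 then 0 else
                ((-1 : ℤ)) ^ (q + 1 + 1 + (T.card + 1 + 1)) •
                  f (x 0 + (x 1 + ∑ i ∈ T, x i.succ.succ))))
            + ∑ T ∈ (Finset.univ : Finset (Fin q)).powerset,
                (if T.card + 1 = 0 then 0 else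
                  ((-1 : ℤ)) ^ (q + 1 + 1 + (T.card + 1)) • f (x 0 + ∑ i ∈ T, x i.succ.succ)))
          + ((∑ T ∈ (Finset.univ : Finset (Fin q)).powerset,
                (if T.card + 1 = 0 then 0 else
                  ((-1 : ℤ)) ^ (q + 1 + 1 + (T.card + 1)) • f (x 1 + ∑ i ∈ T, x i.succ.succ)))
            + ∑ T ∈ (Finset.univ : Finset (Fin q)).powerset,
                (if T.card = 0 then 0 else
                  ((-1 : ℤ)) ^ (q + 1 + 1 + T.card) • f (∑ i ∈ T, x i.succ.succ))) :=
      powerset_split2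
        (fun k v => if k = 0 then (0 : B) else ((-1 : ℤ)) ^ (q + 1 + 1 + k) • f v) x
    rw [hbig]
    have e1 : (∑ T ∈ (Finset.univ : Finset (Fin q)).powerset,
          (if T.card + 1 + 1 = 0 then 0 else
            ((-1 : ℤ)) ^ (q + 1 + 1 + (T.card + 1 + 1)) •
              f (x 0 + (x 1 + ∑ i ∈ T, x i.succ.succ))))
        = ∑ T ∈ (Finset.univ : Finset (Fin q)).powerset,
            ((-1 : ℤ)) ^ (q + T.card) • f (x 0 + x 1 + ∑ i ∈ T, x i.succ.succ) := by
      refine Finset.sum_congr rfl fun T _ => ?_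
      rw [if_neg (Nat.succ_ne_zero _), add_assoc (x 0) (x 1)]
      congr 1
      rw [show q + 1 + 1 + (T.card + 1 + 1) = q + T.card + 2 + 2 by omega,
        neg_one_pow_plus_two, neg_one_pow_plus_two]
    have e2 : ∀ z : A, (∑ T ∈ (Finset.univ : Finset (Fin q)).powerset,
          (if T.card + 1 = 0 then 0 else
            ((-1 : ℤ)) ^ (q + 1 + 1 + (T.card + 1)) • f (z + ∑ i ∈ T, x i.succ.succ)))
        = -∑ T ∈ (Finset.univ : Finset (Fin q)).powerset,
            ((-1 : ℤ)) ^ (q + T.card) • f (z + ∑ i ∈ T, x i.succ.succ) := by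
      intro z
      rw [← Finset.sum_neg_distrib]
      refine Finset.sum_congr rfl fun T _ => ?_
      rw [if_neg (Nat.succ_ne_zero _), ← neg_smul]
      congr 1
      rw [show q + 1 + 1 + (T.card + 1) = q + T.card + 1 + 2 by omega, neg_one_pow_plus_two,
        pow_succ]
      ring
    have e4 : (∑ T ∈ (Finset.univ : Finset (Fin q)).powerset,
          (if T.card = 0 then 0 else
            ((-1 : ℤ)) ^ (q + 1 + 1 + T.card) • f (∑ i ∈ T, x i.succ.succ)))
        = -∑ T ∈ (Finset.univ : Finset (Fin q)).powerset,
            (if T.card = 0 then 0 else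
              ((-1 : ℤ)) ^ (q + 1 + T.card) • f (∑ i ∈ T, x i.succ.succ)) := by
      rw [← Finset.sum_neg_distrib]
      refine Finset.sum_congr rfl fun T _ => ?_
      by_cases h : T.card = 0
      · simp [h]
      · rw [if_neg h, if_neg h, ← neg_smul]
        congr 1
        rw [show q + 1 + 1 + T.card = q + 1 + T.card + 1 by omega, pow_succ]
        ring
    rw [e1, e2, e2, e4]
    abel

/-- The iterated discrete derivative evaluated on an enumeration of a finset equals
the inclusion–exclusion sum over the subsets of that finset. -/
private lemma discDeriv_enum {M₀ : Type*} [DecidableEq M₀] (J : Finset M₀) (h : J.Nonempty)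
    (e : Fin (J.card - 1 + 1) ≃ {j // j ∈ J}) (x : M₀ → A) :
    discDeriv f (J.card - 1) (fun i => x ↑(e i))
      = ∑ T ∈ J.powerset,
          (if T.card = 0 then 0 else ((-1 : ℤ)) ^ (J.card + T.card) • f (∑ i ∈ T, x i)) := by
  have hm : J.card - 1 + 1 = J.card := Nat.succ_pred_eq_of_pos (Finset.card_pos.2 h)
  have hinj : Function.Injective (fun i => (↑(e i) : M₀)) :=
    fun a b hab => e.injective (Subtype.ext hab)
  have hJ : J = Finset.univ.map ⟨fun i => ↑(e i), hinj⟩ := by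
    ext a
    simp only [Finset.mem_map, Finset.mem_univ, true_and, Function.Embedding.coeFn_mk]
    constructor
    · intro ha; exact ⟨e.symm ⟨a, ha⟩, by simp⟩
    · rintro ⟨i, rfl⟩; exact (e i).2
  rw [discDeriv_eq_sum]
  conv_rhs => rw [hJ, sum_powerset_map']
  refine Finset.sum_congr rfl fun T _ => ?_
  rw [Finset.card_map, Finset.sum_map]
  simp only [Function.Embedding.coeFn_mk, Finset.card_map, Finset.card_univ, Fintype.card_fin]

private lemma inner_sign_sum {ι : Type*} [DecidableEq ι] {s T : Finset ι} (hT : T ⊆ s) :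
    ∑ J ∈ s.powerset.filter (fun J => T ⊆ J), ((-1 : ℤ)) ^ (J.card + T.card)
      = if T = s then 1 else 0 := by
  have hmain : ∑ J ∈ s.powerset.filter (fun J => T ⊆ J), ((-1 : ℤ)) ^ (J.card + T.card)
      = ∑ S ∈ (s \ T).powerset, ((-1 : ℤ)) ^ S.card := by
    refine Finset.sum_nbij (fun J => J \ T) ?_ ?_ ?_ ?_
    · intro J hJ
      rw [Finset.mem_filter, Finset.mem_powerset] at hJ
      rw [Finset.mem_powerset]
      exact Finset.sdiff_subset_sdiff hJ.1 Finset.Subset.rfl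
    · intro J1 h1 J2 h2 hEq
      rw [Finset.mem_coe, Finset.mem_filter] at h1 h2
      simp only at hEq
      rw [← Finset.sdiff_union_of_subset h1.2, ← Finset.sdiff_union_of_subset h2.2, hEq]
    · intro S hS
      rw [Finset.mem_coe, Finset.mem_powerset] at hS
      have hdisj : Disjoint S T := Finset.disjoint_of_subset_left hS Finset.sdiff_disjoint
      refine ⟨S ∪ T, ?_, ?_⟩
      · rw [Finset.mem_coe, Finset.mem_filter, Finset.mem_powerset]
        exact ⟨Finset.union_subset (hS.trans (Finset.sdiff_subset)) hT,
          Finset.subset_union_right⟩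
      · simp only
        exact Finset.union_sdiff_cancel_right hdisj
    · intro J hJ
      rw [Finset.mem_filter] at hJ
      have hc : J.card = (J \ T).card + T.card :=
        (Finset.card_sdiff_add_card_eq_card hJ.2).symm
      rw [hc, add_assoc, ← add_assoc, neg_one_pow_add_twice]
  rw [hmain, Finset.sum_powerset_neg_one_pow_card]
  by_cases h' : T = s
  · subst h'; simp
  · rw [if_neg h', if_neg (fun hc => h'
      (Finset.Subset.antisymm hT (Finset.sdiff_eq_empty_iff_subset.1 hc)))]

/-- The main inclusion–exclusion computation. -/
private lemma sum_powerset_N {ι : Type*} [DecidableEq ι] (s : Finset ι) (x : ι → A) :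
    (∑ J ∈ s.powerset, ∑ T ∈ J.powerset,
        (if T.card = 0 then 0 else ((-1 : ℤ)) ^ (J.card + T.card) • f (∑ i ∈ T, x i)))
      = if s = ∅ then 0 else f (∑ i ∈ s, x i) := by
  have hpow : ∀ J ∈ s.powerset, J.powerset = s.powerset.filter (fun T => T ⊆ J) := by
    intro J hJ
    rw [Finset.mem_powerset] at hJ
    ext T
    simp only [Finset.mem_powerset, Finset.mem_filter]
    exact ⟨fun h => ⟨h.trans hJ, h⟩, fun h => h.2⟩
  calc (∑ J ∈ s.powerset, ∑ T ∈ J.powerset,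
        (if T.card = 0 then 0 else ((-1 : ℤ)) ^ (J.card + T.card) • f (∑ i ∈ T, x i)))
      = ∑ J ∈ s.powerset, ∑ T ∈ s.powerset,
          (if T ⊆ J then
            (if T.card = 0 then 0 else ((-1 : ℤ)) ^ (J.card + T.card) • f (∑ i ∈ T, x i))
          else 0) := by
        refine Finset.sum_congr rfl fun J hJ => ?_
        rw [hpow J hJ, Finset.sum_filter]
    _ = ∑ T ∈ s.powerset, ∑ J ∈ s.powerset,
          (if T ⊆ J then
            (if T.card = 0 then 0 else ((-1 : ℤ)) ^ (J.card + T.card) • f (∑ i ∈ T, x i))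
          else 0) := Finset.sum_comm
    _ = ∑ T ∈ s.powerset,
          (if T = s then (if T.card = 0 then 0 else f (∑ i ∈ T, x i)) else 0) := by
        refine Finset.sum_congr rfl fun T hT => ?_
        rw [Finset.mem_powerset] at hT
        by_cases hT0 : T.card = 0
        · simp [hT0]
        · have : ∀ J : Finset ι,
              (if T ⊆ J then
                (if T.card = 0 then 0 else ((-1 : ℤ)) ^ (J.card + T.card) • f (∑ i ∈ T, x i))
              else 0)
              = (if T ⊆ J then ((-1 : ℤ)) ^ (J.card + T.card) else 0) • f (∑ i ∈ T, x i) := by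
            intro J
            rw [ite_smul, zero_smul, if_neg hT0]
          rw [Finset.sum_congr rfl fun J _ => this J, ← Finset.sum_smul,
            ← Finset.sum_filter, inner_sign_sum hT, ite_smul, zero_smul, one_smul,
            if_neg hT0]
    _ = if s = ∅ then 0 else f (∑ i ∈ s, x i) := by
        rw [Finset.sum_ite_eq' s.powerset s
          (fun T => if T.card = 0 then 0 else f (∑ i ∈ T, x i))]
        rw [if_pos (Finset.mem_powerset.2 Finset.Subset.rfl)]
        by_cases hs : s = ∅
        · simp [hs]
        · rw [if_neg hs, if_neg (by simpa [Finset.card_eq_zero] using hs)]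

end DiscTaylorAux

/-- **Discrete Taylor Expansion.** For an arbitrary map `f : A → B` between additive
commutative groups and a finite index set `M₀` which is nonempty (or, alternatively,
with `f 0 = 0`), for every family `x : M₀ → A` one has
`f (∑ j, x j) = ∑_{∅ ≠ J ⊆ M₀} (∂^{|J|−1} f)((x_j)_{j∈J})`,
where the iterated discrete derivative may be evaluated at the family `(x_j)_{j∈J}`
enumerated in any order (the choice of orders is the datum `e`). -/
theorem discrete_taylor_expansion {A B : Type*} [AddCommGroup A] [AddCommGroup B]
    (f : A → B) (M₀ : Type*) [Fintype M₀] [DecidableEq M₀]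
    (hM : Nonempty M₀ ∨ f 0 = 0)
    (e : ∀ J : Finset M₀, J.Nonempty → (Fin (J.card - 1 + 1) ≃ {j // j ∈ J}))
    (x : M₀ → A) :
    f (∑ j, x j) =
      ∑ J : Finset M₀,
        if h : J.Nonempty then
          discDeriv f (J.card - 1) (fun i => x ↑(e J h i))
        else 0 := by
  have key : ∀ J : Finset M₀,
      (if h : J.Nonempty then discDeriv f (J.card - 1) (fun i => x ↑(e J h i)) else 0)
        = ∑ T ∈ J.powerset,
            (if T.card = 0 then 0 else ((-1 : ℤ)) ^ (J.card + T.card) • f (∑ i ∈ T, x i)) := by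
    intro J
    by_cases h : J.Nonempty
    · rw [dif_pos h, discDeriv_enum f J h (e J h) x]
    · rw [dif_neg h]
      rw [Finset.not_nonempty_iff_eq_empty] at h
      subst h
      simp
  rw [Finset.sum_congr rfl fun J _ => key J]
  rw [show (Finset.univ : Finset (Finset M₀)) = (Finset.univ : Finset M₀).powerset from
    (Finset.powerset_univ).symm]
  rw [sum_powerset_N]
  by_cases hu : (Finset.univ : Finset M₀) = ∅
  · rw [if_pos hu]
    have h0 : f 0 = 0 := by
      rcases hM with h | h
      · exact absurd hu (by simp [Finset.univ_eq_empty_iff, not_isEmpty_of_nonempty M₀])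
      · exact h
    have : (∑ j, x j) = 0 := by rw [hu]; simp
    rw [this, h0]
  · rw [if_neg hu]
end

section
/- Let G : R_A → R_B be an admissible transformation. Then G preserves divisibility by monomials: for every finitely supported function d : ℕ → ℕ and every α ∈ R_A such that the monomial z^d divides α, the monomial z^d divides G(α). -/
/-! An admissible transformation `G : R_A → R_B` between the rings of power series in
countably many variables involving only finitely many variables preserves divisibility
by monomials. -/

noncomputable section

/-- The additive subgroup of `MvPowerSeries σ' R` of series involving only finitely
many variables (for `σ' = ℕ` this is the subring `R_A = ∪_l A[[z₀, …, z_{l−1}]]`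
of `A[[z₀, z₁, …]]`, viewed as an additive subgroup). -/
def finVar (σ' R : Type*) [CommRing R] : AddSubgroup (MvPowerSeries σ' R) where
  carrier := {α | ∃ s : Finset σ', ∀ d : σ' →₀ ℕ, MvPowerSeries.coeff (R := R) d α ≠ 0 → d.support ⊆ s}
  zero_mem' := ⟨∅, fun d hd => absurd (map_zero (MvPowerSeries.coeff (R := R) d)) hd⟩
  add_mem' := by
    classical
    rintro a b ⟨s, hs⟩ ⟨t, ht⟩
    refine ⟨s ∪ t, fun d hd => ?_⟩
    by_cases ha : MvPowerSeries.coeff d a = 0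
    · have hb : MvPowerSeries.coeff d b ≠ 0 := by
        intro hb
        exact hd (by rw [map_add, ha, hb, add_zero])
      exact (ht d hb).trans Finset.subset_union_right
    · exact (hs d ha).trans Finset.subset_union_left
  neg_mem' := by
    rintro a ⟨s, hs⟩
    refine ⟨s, fun d hd => hs d fun h => hd ?_⟩
    rw [map_neg, h, neg_zero]

variable {σ' R : Type*} [CommRing R]

/-- Renaming the variables of a multivariate power series along a permutation of the
variable index set:  `z_j ↦ z_{e j}`. -/
def renameVars (e : Equiv.Perm σ') (α : MvPowerSeries σ' R) : MvPowerSeries σ' R :=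
  fun d => MvPowerSeries.coeff (R := R) (Finsupp.equivMapDomain e.symm d) α

/-- The endomorphism of `MvPowerSeries σ' R` substituting `0` for the variable `z_v`
(and fixing all other variables). -/
def substZeroAt (v : σ') (α : MvPowerSeries σ' R) : MvPowerSeries σ' R :=
  fun d => if d v = 0 then MvPowerSeries.coeff (R := R) d α else 0

/-- The endomorphism of `MvPowerSeries σ' R` substituting the variable `z_w` for the
variable `z_v` (and fixing all other variables). -/
def substVarAt (v w : σ') (α : MvPowerSeries σ' R) : MvPowerSeries σ' R :=
  fun d =>
    if d v = 0 then
      ∑ a ∈ Finset.range (d w + 1),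
        MvPowerSeries.coeff (R := R) (Finsupp.update (Finsupp.update d w (d w - a)) v a) α
    else 0


namespace AdmAux
open MvPowerSeries Finsupp

variable {R : Type*} [CommRing R]

lemma upd_apply (f : ℕ →₀ ℕ) (x c y : ℕ) :
    (Finsupp.update f x c) y = if y = x then c else f y := by
  rw [Finsupp.coe_update]; exact Function.update_apply _ _ _ _

lemma mem_finVar {x : MvPowerSeries ℕ R} :
    x ∈ finVar ℕ R ↔ ∃ s : Finset ℕ, ∀ d : ℕ →₀ ℕ, MvPowerSeries.coeff (R := R) d x ≠ 0 → d.support ⊆ s :=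
  Iff.rfl

lemma dvd_iff (d : ℕ →₀ ℕ) (α : MvPowerSeries ℕ R) :
    MvPowerSeries.monomial (R := R) d 1 ∣ α ↔ ∀ e : ℕ →₀ ℕ, ¬ d ≤ e → MvPowerSeries.coeff (R := R) e α = 0 := by
  constructor
  · rintro ⟨β, rfl⟩ e he
    rw [coeff_monomial_mul, if_neg he]
  · intro h
    refine ⟨(show MvPowerSeries ℕ R from fun e => MvPowerSeries.coeff (R := R) (e + d) α),
      MvPowerSeries.ext fun e => ?_⟩
    rw [coeff_monomial_mul]
    split_ifs with hle
    · rw [one_mul, coeff_apply]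
      congr 1
      exact (tsub_add_cancel_of_le hle).symm
    · exact h e hle


lemma coeff_renameVars (σ : Equiv.Perm ℕ) (α : MvPowerSeries ℕ R) (e : ℕ →₀ ℕ) :
    MvPowerSeries.coeff (R := R) e (renameVars σ α) =
      MvPowerSeries.coeff (R := R) (Finsupp.equivMapDomain σ.symm e) α := rfl

lemma coeff_substZeroAt (v : ℕ) (α : MvPowerSeries ℕ R) (e : ℕ →₀ ℕ) :
    MvPowerSeries.coeff (R := R) e (substZeroAt v α) =
      if e v = 0 then MvPowerSeries.coeff (R := R) e α else 0 := rfl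

lemma coeff_substVarAt (v w : ℕ) (α : MvPowerSeries ℕ R) (e : ℕ →₀ ℕ) :
    MvPowerSeries.coeff (R := R) e (substVarAt v w α) =
      if e v = 0 then
        ∑ a ∈ Finset.range (e w + 1),
          MvPowerSeries.coeff (R := R) (Finsupp.update (Finsupp.update e w (e w - a)) v a) α
      else 0 := rfl

lemma equivMapDomain_update (g : Equiv.Perm ℕ) (e : ℕ →₀ ℕ) (x c : ℕ) :
    Finsupp.equivMapDomain g (Finsupp.update e x c)
      = Finsupp.update (Finsupp.equivMapDomain g e) (g x) c := by
  ext y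
  rw [Finsupp.equivMapDomain_apply, upd_apply, upd_apply, Finsupp.equivMapDomain_apply]
  by_cases h : y = g x
  · rw [if_pos h, if_pos (by rw [h, Equiv.symm_apply_apply])]
  · rw [if_neg h, if_neg (fun hh => h (by rw [← hh, Equiv.apply_symm_apply]))]

lemma rename_rename (σ : Equiv.Perm ℕ) (α : MvPowerSeries ℕ R) :
    renameVars σ (renameVars σ.symm α) = α := by
  funext e
  show α (Finsupp.equivMapDomain σ.symm.symm (Finsupp.equivMapDomain σ.symm e)) = α e
  congr 1
  ext y
  simp

lemma rename_substZero (σ : Equiv.Perm ℕ) (v : ℕ) (α : MvPowerSeries ℕ R) :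
    renameVars σ (substZeroAt v α) = substZeroAt (σ v) (renameVars σ α) := by
  funext e
  show (if (Finsupp.equivMapDomain σ.symm e) v = 0 then _ else 0) = _
  rw [Finsupp.equivMapDomain_apply, Equiv.symm_symm]
  rfl

lemma rename_substVar (σ : Equiv.Perm ℕ) (v w : ℕ) (α : MvPowerSeries ℕ R) :
    renameVars σ (substVarAt v w α) = substVarAt (σ v) (σ w) (renameVars σ α) := by
  funext e
  show (if (Finsupp.equivMapDomain σ.symm e) v = 0 then _ else 0)
      = (if e (σ v) = 0 then _ else 0)
  simp only [Finsupp.equivMapDomain_apply, Equiv.symm_symm]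
  refine if_congr Iff.rfl ?_ rfl
  refine Finset.sum_congr rfl fun a _ => ?_
  rw [coeff_renameVars, equivMapDomain_update, equivMapDomain_update,
    Equiv.symm_apply_apply, Equiv.symm_apply_apply]


lemma mem_rename (σ : Equiv.Perm ℕ) {α : MvPowerSeries ℕ R} (hα : α ∈ finVar ℕ R) :
    renameVars σ α ∈ finVar ℕ R := by
  obtain ⟨s, hs⟩ := hα
  refine ⟨s.image σ, fun e he => ?_⟩
  rw [coeff_renameVars] at he
  intro y hy
  rw [Finsupp.mem_support_iff] at hy
  have h1 : (Finsupp.equivMapDomain σ.symm e) (σ.symm y) ≠ 0 := by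
    rwa [Finsupp.equivMapDomain_apply, Equiv.symm_symm, Equiv.apply_symm_apply]
  have h2 : σ.symm y ∈ s := hs _ he (Finsupp.mem_support_iff.mpr h1)
  exact Finset.mem_image.mpr ⟨σ.symm y, h2, Equiv.apply_symm_apply σ y⟩

lemma mem_substZero (v : ℕ) {α : MvPowerSeries ℕ R} (hα : α ∈ finVar ℕ R) :
    substZeroAt v α ∈ finVar ℕ R := by
  obtain ⟨s, hs⟩ := hα
  refine ⟨s, fun e he => ?_⟩
  rw [coeff_substZeroAt] at he
  split_ifs at he
  · exact hs e he
  · exact absurd rfl he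

lemma mem_substVar (v w : ℕ) {α : MvPowerSeries ℕ R} (hα : α ∈ finVar ℕ R) :
    substVarAt v w α ∈ finVar ℕ R := by
  classical
  obtain ⟨s, hs⟩ := hα
  refine ⟨s ∪ {v, w}, fun e he => ?_⟩
  rw [coeff_substVarAt] at he
  split_ifs at he with hev
  · obtain ⟨a, _, ha⟩ := Finset.exists_ne_zero_of_sum_ne_zero he
    intro y hy
    rw [Finsupp.mem_support_iff] at hy
    by_cases hyv : y = v
    · subst hyv; simp
    · by_cases hyw : y = w
      · subst hyw; simp
      · have : (Finsupp.update (Finsupp.update e w (e w - a)) v a) y ≠ 0 := by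
          rwa [upd_apply, if_neg hyv, upd_apply, if_neg hyw]
        have := hs _ ha (Finsupp.mem_support_iff.mpr this)
        exact Finset.mem_union_left _ this
  · exact absurd rfl he

lemma mem_monomial_mul (d : ℕ →₀ ℕ) {β : MvPowerSeries ℕ R} (hβ : β ∈ finVar ℕ R) :
    MvPowerSeries.monomial (R := R) d 1 * β ∈ finVar ℕ R := by
  obtain ⟨s, hs⟩ := hβ
  refine ⟨s ∪ d.support, fun e he => ?_⟩
  rw [coeff_monomial_mul] at he
  split_ifs at he with hle
  · rw [one_mul] at he
    intro y hy
    rw [Finsupp.mem_support_iff] at hy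
    by_cases hyd : y ∈ d.support
    · exact Finset.mem_union_right _ hyd
    · have hd0 : d y = 0 := Finsupp.notMem_support_iff.mp hyd
      have : (e - d) y ≠ 0 := by rw [Finsupp.tsub_apply, hd0]; omega
      exact Finset.mem_union_left _ (hs _ he (Finsupp.mem_support_iff.mpr this))
  · exact absurd rfl he


section Vals

variable (v w : ℕ) (d : ℕ →₀ ℕ)

lemma dp_v (hvw : v ≠ w) : ((d - Finsupp.single v 1 + Finsupp.single w 1 : ℕ →₀ ℕ)) v = d v - 1 := by
  rw [Finsupp.add_apply, Finsupp.tsub_apply, Finsupp.single_eq_same,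
    Finsupp.single_eq_of_ne' (Ne.symm hvw), Nat.add_zero]

lemma dp_w (hvw : v ≠ w) : ((d - Finsupp.single v 1 + Finsupp.single w 1 : ℕ →₀ ℕ)) w = d w + 1 := by
  rw [Finsupp.add_apply, Finsupp.tsub_apply, Finsupp.single_eq_same,
    Finsupp.single_eq_of_ne' hvw, Nat.sub_zero]

lemma dp_other {u : ℕ} (huv : u ≠ v) (huw : u ≠ w) :
    ((d - Finsupp.single v 1 + Finsupp.single w 1 : ℕ →₀ ℕ)) u = d u := by
  rw [Finsupp.add_apply, Finsupp.tsub_apply, Finsupp.single_eq_of_ne' (Ne.symm huv),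
    Finsupp.single_eq_of_ne' (Ne.symm huw), Nat.sub_zero, Nat.add_zero]

variable (e : ℕ →₀ ℕ) (a : ℕ)

lemma fa_w : (Finsupp.update (Finsupp.update e v (e v - a)) w a) w = a := by
  rw [upd_apply, if_pos rfl]

lemma fa_v (hvw : v ≠ w) :
    (Finsupp.update (Finsupp.update e v (e v - a)) w a) v = e v - a := by
  rw [upd_apply, if_neg hvw, upd_apply, if_pos rfl]

lemma fa_other {u : ℕ} (huv : u ≠ v) (huw : u ≠ w) :
    (Finsupp.update (Finsupp.update e v (e v - a)) w a) u = e u := by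
  rw [upd_apply, if_neg huw, upd_apply, if_neg huv]

end Vals

/-- Key computation: substituting `z_v` for the (fresh) variable `z_w` carries
`z^{d'} β` to `z^d β`, where `d' = d - e_v + e_w`. -/
lemma substVar_monomial_mul (v w : ℕ) (hvw : v ≠ w) (d : ℕ →₀ ℕ) (hdw : d w = 0)
    (hdv : 1 ≤ d v) (β : MvPowerSeries ℕ R)
    (hβ : ∀ e : ℕ →₀ ℕ, MvPowerSeries.coeff (R := R) e β ≠ 0 → e w = 0) :
    substVarAt w v (MvPowerSeries.monomial (R := R) (d - Finsupp.single v 1 + Finsupp.single w 1) 1 * β)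
      = MvPowerSeries.monomial (R := R) d 1 * β := by
  classical
  set d' := d - Finsupp.single v 1 + Finsupp.single w 1 with hd'
  apply MvPowerSeries.ext
  intro e
  rw [coeff_substVarAt, coeff_monomial_mul]
  by_cases hew : e w = 0
  · rw [if_pos hew]
    -- the general term
    have hterm : ∀ a, MvPowerSeries.coeff (R := R)
        (Finsupp.update (Finsupp.update e v (e v - a)) w a) (MvPowerSeries.monomial (R := R) d' 1 * β)
        = if d' ≤ Finsupp.update (Finsupp.update e v (e v - a)) w a then
            MvPowerSeries.coeff (R := R) ((Finsupp.update (Finsupp.update e v (e v - a)) w a) - d') β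
          else 0 := by
      intro a; rw [coeff_monomial_mul]; split_ifs <;> [rw [one_mul]; rfl]
    have hzero : ∀ a ∈ Finset.range (e v + 1), a ≠ 1 →
        MvPowerSeries.coeff (R := R)
          (Finsupp.update (Finsupp.update e v (e v - a)) w a)
          (MvPowerSeries.monomial (R := R) d' 1 * β) = 0 := by
      intro a _ ha1
      rw [hterm]
      rcases Nat.eq_zero_or_pos a with rfl | hpos
      · rw [if_neg]
        intro hle
        have := hle w
        rw [fa_w, hd', dp_w v w d hvw] at this
        omega
      · split_ifs with hle
        · by_contra hne
          have h0 := hβ _ hne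
          rw [Finsupp.tsub_apply, fa_w, hd', dp_w v w d hvw, hdw] at h0
          omega
        · rfl
    by_cases hev : 1 ≤ e v
    · rw [Finset.sum_eq_single_of_mem 1 (Finset.mem_range.mpr (by omega)) hzero, hterm]
      have hiff : (d' ≤ Finsupp.update (Finsupp.update e v (e v - 1)) w 1) ↔ d ≤ e := by
        constructor <;> intro h u <;> have hu := h u
        · by_cases huv : u = v
          · subst huv
            rw [hd', dp_v u w d hvw, fa_v u w e 1 hvw] at hu
            omega
          · by_cases huw : u = w
            · subst huw; omega
            · rwa [hd', dp_other v w d huv huw, fa_other v w e 1 huv huw] at hu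
        · by_cases huv : u = v
          · subst huv
            rw [hd', dp_v u w d hvw, fa_v u w e 1 hvw]
            omega
          · by_cases huw : u = w
            · subst huw
              rw [hd', dp_w v u d hvw, fa_w v u e 1, hdw]
            · rwa [hd', dp_other v w d huv huw, fa_other v w e 1 huv huw]
      have hsub : (Finsupp.update (Finsupp.update e v (e v - 1)) w 1) - d' = e - d := by
        ext u
        rw [Finsupp.tsub_apply, Finsupp.tsub_apply]
        by_cases huv : u = v
        · subst huv
          rw [hd', dp_v u w d hvw, fa_v u w e 1 hvw]
          omega
        · by_cases huw : u = w
          · subst huw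
            rw [hd', dp_w v u d hvw, fa_w v u e 1, hdw, hew]
          · rw [hd', dp_other v w d huv huw, fa_other v w e 1 huv huw]
      rw [hsub, if_congr hiff rfl rfl]
      split_ifs with h
      · rw [one_mul]
      · rfl
    · have hev0 : e v = 0 := by omega
      rw [Finset.sum_eq_zero fun a ha => hzero a ha (by
        rw [Finset.mem_range] at ha; omega), if_neg]
      intro hle
      have := hle v
      omega
  · rw [if_neg hew]
    symm
    split_ifs with hle
    · rw [one_mul]
      by_contra hne
      have h0 := hβ _ hne
      rw [Finsupp.tsub_apply, hdw] at h0
      omega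
    · rfl

/-- If `z^{d'}` divides `γ`, then `z^d` divides the substitution `z_w ↦ z_v` of `γ`. -/
lemma substVar_dvd (v w : ℕ) (hvw : v ≠ w) (d : ℕ →₀ ℕ) (hdw : d w = 0) (hdv : 1 ≤ d v)
    (γ : MvPowerSeries ℕ R)
    (hγ : ∀ e : ℕ →₀ ℕ, ¬ (d - Finsupp.single v 1 + Finsupp.single w 1) ≤ e →
      MvPowerSeries.coeff (R := R) e γ = 0)
    (e : ℕ →₀ ℕ) (hde : ¬ d ≤ e) :
    MvPowerSeries.coeff (R := R) e (substVarAt w v γ) = 0 := by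
  classical
  rw [coeff_substVarAt]
  split_ifs with hew
  · apply Finset.sum_eq_zero
    intro a ha
    rw [Finset.mem_range] at ha
    apply hγ
    intro hle
    apply hde
    intro u
    have h1 := hle v
    have h2 := hle w
    have hu := hle u
    rw [dp_v v w d hvw, fa_v v w e a hvw] at h1
    rw [dp_w v w d hvw, fa_w v w e a, hdw] at h2
    by_cases huv : u = v
    · subst huv; omega
    · by_cases huw : u = w
      · subst huw; omega
      · rwa [dp_other v w d huv huw, fa_other v w e a huv huw] at hu
  · rfl


lemma conj_substZero (σ : Equiv.Perm ℕ) (v : ℕ) (hσ0 : σ 0 = v) (γ : MvPowerSeries ℕ R) :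
    renameVars σ (substZeroAt 0 (renameVars σ.symm γ)) = substZeroAt v γ := by
  rw [rename_substZero, rename_rename, hσ0]

lemma conj_substVar (σ : Equiv.Perm ℕ) (v w : ℕ) (hσ0 : σ 0 = v) (hσ1 : σ 1 = w)
    (γ : MvPowerSeries ℕ R) :
    renameVars σ (substVarAt 0 1 (renameVars σ.symm γ)) = substVarAt v w γ := by
  rw [rename_substVar, rename_rename, hσ0, hσ1]

lemma symm_finite {σ : Equiv.Perm ℕ} (h : {x | σ x ≠ x}.Finite) :
    {x | σ.symm x ≠ x}.Finite := by
  refine h.subset fun x hx => ?_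
  simp only [Set.mem_setOf_eq] at hx ⊢
  intro hc
  apply hx
  nth_rewrite 1 [← hc]
  exact σ.symm_apply_apply x

lemma exists_perm (v w : ℕ) (hvw : v ≠ w) :
    ∃ σ : Equiv.Perm ℕ, σ 0 = v ∧ σ 1 = w ∧ {x | σ x ≠ x}.Finite := by
  classical
  set s1 : ℕ := Equiv.swap 0 v 1 with hs1
  refine ⟨(Equiv.swap 0 v).trans (Equiv.swap s1 w), ?_, ?_, ?_⟩
  · rw [Equiv.trans_apply, Equiv.swap_apply_left]
    apply Equiv.swap_apply_of_ne_of_ne _ hvw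
    rcases eq_or_ne v 1 with rfl | hv1
    · rw [hs1, Equiv.swap_apply_right]
      exact one_ne_zero
    · rw [hs1, Equiv.swap_apply_of_ne_of_ne one_ne_zero (Ne.symm hv1)]
      exact hv1
  · rw [Equiv.trans_apply, ← hs1, Equiv.swap_apply_left]
  · apply Set.Finite.subset ((((Set.finite_singleton w).insert s1).insert v).insert 0)
    intro x hx
    simp only [Set.mem_setOf_eq] at hx
    by_contra hmem
    simp only [Set.mem_insert_iff, Set.mem_singleton_iff, not_or] at hmem
    obtain ⟨h0, hv, hs, hw⟩ := hmem
    apply hx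
    rw [Equiv.trans_apply, Equiv.swap_apply_of_ne_of_ne h0 hv,
      Equiv.swap_apply_of_ne_of_ne hs hw]

end AdmAux
/-- An admissible transformation `G : R_A → R_B` (with `G 0 = 0`, commuting with the
renaming of variables along finitely supported permutations, with the substitution of
`0` for `z₀`, and with the substitution of `z₁` for `z₀`) preserves divisibility by
monomials: if the monomial `z^d` divides `α`, then `z^d` divides `G α`. -/
theorem admissible_preserves_monomial_divisibility
    {A B : Type*} [CommRing A] [CommRing B]
    (G : finVar ℕ A → finVar ℕ B)
    (hG0 : G 0 = 0)
    (hGrename : ∀ σ : Equiv.Perm ℕ, {x | σ x ≠ x}.Finite →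
      ∀ α β : finVar ℕ A, (β : MvPowerSeries ℕ A) = renameVars σ ↑α →
        (G β : MvPowerSeries ℕ B) = renameVars σ ↑(G α))
    (hGeps : ∀ α β : finVar ℕ A, (β : MvPowerSeries ℕ A) = substZeroAt 0 ↑α →
        (G β : MvPowerSeries ℕ B) = substZeroAt 0 ↑(G α))
    (hGdelta : ∀ α β : finVar ℕ A, (β : MvPowerSeries ℕ A) = substVarAt 0 1 ↑α →
        (G β : MvPowerSeries ℕ B) = substVarAt 0 1 ↑(G α))
    (d : ℕ →₀ ℕ) (α : finVar ℕ A)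
    (hdvd : MvPowerSeries.monomial (R := A) d 1 ∣ (α : MvPowerSeries ℕ A)) :
    MvPowerSeries.monomial (R := B) d 1 ∣ (G α : MvPowerSeries ℕ B) := by
  classical
  -- `G` commutes with substituting `0` for any variable
  have hGeps' : ∀ v : ℕ, ∀ α β : finVar ℕ A, (β : MvPowerSeries ℕ A) = substZeroAt v ↑α →
      (G β : MvPowerSeries ℕ B) = substZeroAt v ↑(G α) := by
    intro v α β hβ
    obtain ⟨σ, hσ0, -, hσfin⟩ := AdmAux.exists_perm v (v + 1) (by omega)
    have hfin' := AdmAux.symm_finite hσfin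
    set α₁ : finVar ℕ A := ⟨renameVars σ.symm ↑α, AdmAux.mem_rename σ.symm α.2⟩ with hα₁
    have h1 : (G α₁ : MvPowerSeries ℕ B) = renameVars σ.symm ↑(G α) :=
      hGrename σ.symm hfin' α α₁ rfl
    set β₁ : finVar ℕ A := ⟨substZeroAt 0 ↑α₁, AdmAux.mem_substZero 0 α₁.2⟩ with hβ₁
    have h2 : (G β₁ : MvPowerSeries ℕ B) = substZeroAt 0 ↑(G α₁) := hGeps α₁ β₁ rfl
    have hββ₁ : (β : MvPowerSeries ℕ A) = renameVars σ ↑β₁ := by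
      rw [hβ]
      exact (AdmAux.conj_substZero σ v hσ0 ((α : MvPowerSeries ℕ A))).symm
    have h3 : (G β : MvPowerSeries ℕ B) = renameVars σ ↑(G β₁) := hGrename σ hσfin β₁ β hββ₁
    rw [h3, h2, h1, AdmAux.conj_substZero σ v hσ0]
  -- `G` commutes with substituting `z_w` for `z_v`, for any `v ≠ w`
  have hGsubst' : ∀ v w : ℕ, v ≠ w → ∀ α β : finVar ℕ A,
      (β : MvPowerSeries ℕ A) = substVarAt v w ↑α →
      (G β : MvPowerSeries ℕ B) = substVarAt v w ↑(G α) := by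
    intro v w hvw α β hβ
    obtain ⟨σ, hσ0, hσ1, hσfin⟩ := AdmAux.exists_perm v w hvw
    have hfin' := AdmAux.symm_finite hσfin
    set α₁ : finVar ℕ A := ⟨renameVars σ.symm ↑α, AdmAux.mem_rename σ.symm α.2⟩ with hα₁
    have h1 : (G α₁ : MvPowerSeries ℕ B) = renameVars σ.symm ↑(G α) :=
      hGrename σ.symm hfin' α α₁ rfl
    set β₁ : finVar ℕ A := ⟨substVarAt 0 1 ↑α₁, AdmAux.mem_substVar 0 1 α₁.2⟩ with hβ₁
    have h2 : (G β₁ : MvPowerSeries ℕ B) = substVarAt 0 1 ↑(G α₁) := hGdelta α₁ β₁ rfl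
    have hββ₁ : (β : MvPowerSeries ℕ A) = renameVars σ ↑β₁ := by
      rw [hβ]
      exact (AdmAux.conj_substVar σ v w hσ0 hσ1 ((α : MvPowerSeries ℕ A))).symm
    have h3 : (G β : MvPowerSeries ℕ B) = renameVars σ ↑(G β₁) := hGrename σ hσfin β₁ β hββ₁
    rw [h3, h2, h1, AdmAux.conj_substVar σ v w hσ0 hσ1]
  clear hGrename hGeps hGdelta
  -- main induction on the excess of the monomial
  suffices H : ∀ n : ℕ, ∀ d : ℕ →₀ ℕ, (∑ u ∈ d.support, (d u - 1)) = n →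
      ∀ α : finVar ℕ A, MvPowerSeries.monomial (R := A) d 1 ∣ (α : MvPowerSeries ℕ A) →
      MvPowerSeries.monomial (R := B) d 1 ∣ (G α : MvPowerSeries ℕ B) by
    exact H _ d rfl α hdvd
  clear hdvd d α
  intro n
  induction n using Nat.strong_induction_on with
  | _ n IH =>
  intro d hn α hdvd
  by_cases hsq : ∀ v, d v ≤ 1
  · -- squarefree case, via `substZeroAt`
    rw [AdmAux.dvd_iff]
    intro e he
    have hex : ∃ v, e v < d v := by
      by_contra hcon
      push_neg at hcon
      exact he (Finsupp.le_def.mpr hcon)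
    obtain ⟨v, hv⟩ := hex
    have hev : e v = 0 := by have := hsq v; omega
    have h0 : substZeroAt v ((α : MvPowerSeries ℕ A)) = 0 := by
      apply MvPowerSeries.ext
      intro f
      rw [AdmAux.coeff_substZeroAt, map_zero]
      split_ifs with hf
      · apply (AdmAux.dvd_iff d (α : MvPowerSeries ℕ A)).mp hdvd
        intro hle
        have h1 := hle v
        have := hsq v
        omega
      · rfl
    have hcoe : ((0 : finVar ℕ A) : MvPowerSeries ℕ A) = substZeroAt v ↑α := by
      rw [ZeroMemClass.coe_zero, h0]
    have hz := hGeps' v α 0 hcoe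
    rw [hG0, ZeroMemClass.coe_zero] at hz
    calc MvPowerSeries.coeff (R := B) e ↑(G α)
        = MvPowerSeries.coeff (R := B) e (substZeroAt v ↑(G α)) := by
          rw [AdmAux.coeff_substZeroAt, if_pos hev]
      _ = 0 := by rw [← hz, map_zero]
  · -- there is a variable of multiplicity ≥ 2
    push_neg at hsq
    obtain ⟨v, hv2⟩ := hsq
    obtain ⟨s, hs⟩ := α.2
    obtain ⟨w, hw⟩ := Infinite.exists_notMem_finset (s ∪ d.support)
    have hws : w ∉ s := fun h => hw (Finset.mem_union_left _ h)
    have hwd : w ∉ d.support := fun h => hw (Finset.mem_union_right _ h)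
    have hdw : d w = 0 := Finsupp.notMem_support_iff.mp hwd
    have hvw : v ≠ w := fun h => by rw [← h] at hdw; omega
    obtain ⟨β₀, hβ0⟩ := hdvd
    have hq : ∀ e : ℕ →₀ ℕ, MvPowerSeries.coeff (R := A) e β₀ = MvPowerSeries.coeff (R := A) (e + d) ↑α := by
      intro e
      rw [hβ0, MvPowerSeries.coeff_monomial_mul, if_pos le_add_self, add_tsub_cancel_right,
        one_mul]
    have hβw : ∀ e : ℕ →₀ ℕ, MvPowerSeries.coeff (R := A) e β₀ ≠ 0 → e w = 0 := by
      intro e hne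
      rw [hq] at hne
      have hsupp := hs _ hne
      have : (e + d) w = 0 := by
        by_contra hc
        exact hws (hsupp (Finsupp.mem_support_iff.mpr hc))
      rw [Finsupp.add_apply] at this
      omega
    have hβmem : β₀ ∈ finVar ℕ A := by
      refine ⟨s, fun e hne => ?_⟩
      rw [hq] at hne
      intro y hy
      rw [Finsupp.mem_support_iff] at hy
      refine hs _ hne (Finsupp.mem_support_iff.mpr ?_)
      rw [Finsupp.add_apply]
      omega
    set α' : finVar ℕ A :=
      ⟨MvPowerSeries.monomial (R := A) (d - Finsupp.single v 1 + Finsupp.single w 1) 1 * β₀,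
        AdmAux.mem_monomial_mul _ hβmem⟩ with hα'
    have hK : substVarAt w v (α' : MvPowerSeries ℕ A) = ↑α := by
      show substVarAt w v
        (MvPowerSeries.monomial (R := A) (d - Finsupp.single v 1 + Finsupp.single w 1) 1 * β₀) = ↑α
      rw [AdmAux.substVar_monomial_mul v w hvw d hdw (by omega) β₀ hβw]
      exact hβ0.symm
    -- excess decreases
    have hexc : (∑ u ∈ (d - Finsupp.single v 1 + Finsupp.single w 1).support,
        ((d - Finsupp.single v 1 + Finsupp.single w 1 : ℕ →₀ ℕ) u - 1)) < n := by
      set d' : ℕ →₀ ℕ := d - Finsupp.single v 1 + Finsupp.single w 1 with hd'def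
      set t : Finset ℕ := d.support ∪ {w} with ht
      have hvd : v ∈ d.support := Finsupp.mem_support_iff.mpr (by omega)
      have hvt : v ∈ t := Finset.mem_union_left _ hvd
      have hsub1 : d.support ⊆ t := Finset.subset_union_left
      have hsub2 : d'.support ⊆ t := by
        intro u hu
        rw [Finsupp.mem_support_iff] at hu
        by_cases huv : u = v
        · subst huv; exact hvt
        · by_cases huw : u = w
          · subst huw; exact Finset.mem_union_right _ (Finset.mem_singleton_self _)
          · rw [hd'def, AdmAux.dp_other v w d huv huw] at hu
            exact Finset.mem_union_left _ (Finsupp.mem_support_iff.mpr hu)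
      have h1 : ∑ u ∈ d.support, (d u - 1) = ∑ u ∈ t, (d u - 1) :=
        Finset.sum_subset hsub1 fun x _ hnx => by
          simp [Finsupp.notMem_support_iff.mp hnx]
      have h2 : ∑ u ∈ d'.support, (d' u - 1) = ∑ u ∈ t, (d' u - 1) :=
        Finset.sum_subset hsub2 fun x _ hnx => by
          simp [Finsupp.notMem_support_iff.mp hnx]
      have hE : ∑ u ∈ t.erase v, (d' u - 1) = ∑ u ∈ t.erase v, (d u - 1) := by
        refine Finset.sum_congr rfl fun u hu => ?_
        have huv : u ≠ v := (Finset.mem_erase.mp hu).1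
        by_cases huw : u = w
        · subst huw
          rw [hd'def, AdmAux.dp_w v u d hvw, hdw]
        · rw [hd'def, AdmAux.dp_other v w d huv huw]
      have h3 : ∑ u ∈ t, (d' u - 1) = (d' v - 1) + ∑ u ∈ t.erase v, (d u - 1) := by
        rw [← Finset.add_sum_erase t _ hvt, hE]
      have h4 : ∑ u ∈ t, (d u - 1) = (d v - 1) + ∑ u ∈ t.erase v, (d u - 1) :=
        (Finset.add_sum_erase t _ hvt).symm
      have hdv' : d' v = d v - 1 := by rw [hd'def, AdmAux.dp_v v w d hvw]
      omega
    have hIH := IH _ hexc (d - Finsupp.single v 1 + Finsupp.single w 1) rfl α' ⟨β₀, rfl⟩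
    have hcomm : (G α : MvPowerSeries ℕ B) = substVarAt w v ↑(G α') :=
      hGsubst' w v (Ne.symm hvw) α' α hK.symm
    rw [AdmAux.dvd_iff]
    intro e he
    rw [hcomm]
    exact AdmAux.substVar_dvd v w hvw d hdw (by omega) ((G α' : MvPowerSeries ℕ B))
      (fun f hf => (AdmAux.dvd_iff _ _).mp hIH f hf) e he
end
end

section
/- Let H : R_{A₁} × ⋯ × R_{A_r} → R_B^{(r)} be an admissible r-nary transformation, and let Δ : R_B^{(r)} → R_B be the ring homomorphism induced by the variable substitution z(i)_j ↦ z_j for all i, j (identifying the r blocks of variables), where R_B is the subring of the power series ring over B in variables z₀, z₁, … consisting of series involving finitely many variables. Then for all finitely supported functions d(1), …, d(r) : ℕ → ℕ and all α_i ∈ R_{A_i} such that z^{d(i)} divides α_i for each i, the monomial z^{d(1)+⋯+d(r)} divides Δ(H(α₁, …, α_r)) in R_B. -/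
/-! An admissible `r`-nary transformation
`H : R_{A₁} × ⋯ × R_{A_r} → R_B^{(r)}`, followed by the diagonal substitution
`Δ : z(i)_j ↦ z_j`, preserves divisibility by the product of the monomials. -/

noncomputable section

variable {σ' R : Type*} [CommRing R]

/-- The permutation of the variables `z(i)_j` (indexed by `Fin r × ℕ`) acting by a
permutation `σ` on the `i`-th block of variables and fixing all the other blocks. -/
def blockPerm {r : ℕ} (i : Fin r) (σ : Equiv.Perm ℕ) : Equiv.Perm (Fin r × ℕ) where
  toFun p := (p.1, if p.1 = i then σ p.2 else p.2)
  invFun p := (p.1, if p.1 = i then σ.symm p.2 else p.2)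
  left_inv p := by
    obtain ⟨p1, p2⟩ := p
    by_cases h : p1 = i <;> simp [h]
  right_inv p := by
    obtain ⟨p1, p2⟩ := p
    by_cases h : p1 = i <;> simp [h]

/-- The embedding `j ↦ (i, j)` identifying the variables `z_j` with the `i`-th block
`z(i)_j` of target variables. -/
def blockVar {r : ℕ} (i : Fin r) : ℕ ↪ Fin r × ℕ :=
  ⟨fun j => (i, j), fun a b h => by simpa using h⟩

/-- The map `Δ` induced by the variable substitution `z(i)_j ↦ z_j`, identifying the
`r` blocks of variables: the coefficient of `Δ α` at a monomial `z^d` is the sum of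
the coefficients of `α` at all the monomials in the variables `z(i)_j` mapping to
`z^d` under the substitution. -/
def collapseBlocks {r : ℕ} {B : Type*} [CommRing B] (α : MvPowerSeries (Fin r × ℕ) B) :
    MvPowerSeries ℕ B :=
  fun d =>
    letI : DecidablePred fun e : (Fin r × ℕ) →₀ ℕ => Finsupp.mapDomain Prod.snd e = d :=
      Classical.decPred _
    ∑ e ∈ (Finset.Iic (∑ i : Fin r, Finsupp.embDomain (blockVar i) d)).filter
        (fun e => Finsupp.mapDomain Prod.snd e = d),
      MvPowerSeries.coeff (R := B) e α

open MvPowerSeries Finsupp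

section AuxD
variable {σ'' : Type*} {R' : Type*} [CommRing R']

/-- The support-domination condition equivalent to divisibility by `monomial d 1`. -/
def Dom (d : σ'' →₀ ℕ) (β : MvPowerSeries σ'' R') : Prop :=
  ∀ e : σ'' →₀ ℕ, MvPowerSeries.coeff (R := R') e β ≠ 0 → d ≤ e

lemma dom_of_eq_monomial_mul {d : σ'' →₀ ℕ} {β γ : MvPowerSeries σ'' R'}
    (h : β = MvPowerSeries.monomial (R := R') d 1 * γ) : Dom d β := by
  intro e he
  rw [h, MvPowerSeries.coeff_monomial_mul] at he
  by_contra hle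
  simp [hle] at he

lemma dom_of_dvd {d : σ'' →₀ ℕ} {β : MvPowerSeries σ'' R'}
    (h : MvPowerSeries.monomial (R := R') d 1 ∣ β) : Dom d β := by
  obtain ⟨γ, hγ⟩ := h; exact dom_of_eq_monomial_mul hγ

/-- The canonical quotient witnessing `Dom`. -/
def shiftBy (d : σ'' →₀ ℕ) (β : MvPowerSeries σ'' R') : MvPowerSeries σ'' R' :=
  fun g => MvPowerSeries.coeff (R := R') (g + d) β

lemma eq_monomial_mul_shiftBy {d : σ'' →₀ ℕ} {β : MvPowerSeries σ'' R'} (h : Dom d β) :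
    β = MvPowerSeries.monomial (R := R') d 1 * shiftBy d β := by
  ext e
  rw [MvPowerSeries.coeff_monomial_mul]
  split_ifs with hle
  · rw [one_mul]
    show _ = MvPowerSeries.coeff (R := R') (e - d + d) β
    rw [tsub_add_cancel_of_le hle]
  · by_contra hne
    exact hle (h e fun hc => hne (by rw [hc]))

lemma dvd_of_dom {d : σ'' →₀ ℕ} {β : MvPowerSeries σ'' R'} (h : Dom d β) :
    MvPowerSeries.monomial (R := R') d 1 ∣ β :=
  ⟨shiftBy d β, eq_monomial_mul_shiftBy h⟩

lemma coeff_renameVars (e : Equiv.Perm σ'') (β : MvPowerSeries σ'' R') (d : σ'' →₀ ℕ) :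
    MvPowerSeries.coeff (R := R') d (renameVars e β) =
      MvPowerSeries.coeff (R := R') (Finsupp.equivMapDomain e.symm d) β := rfl

lemma equivMapDomain_equivMapDomain (e : σ'' ≃ σ'') (f : σ'' →₀ ℕ) :
    Finsupp.equivMapDomain e.symm (Finsupp.equivMapDomain e f) = f := by
  ext a
  rw [Finsupp.equivMapDomain_apply, Finsupp.equivMapDomain_apply]
  simp

lemma equivMapDomain_equivMapDomain' (e : σ'' ≃ σ'') (f : σ'' →₀ ℕ) :
    Finsupp.equivMapDomain e (Finsupp.equivMapDomain e.symm f) = f := by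
  have := equivMapDomain_equivMapDomain e.symm f
  simpa using this

lemma renameVars_renameVars (e : Equiv.Perm σ'') (β : MvPowerSeries σ'' R') :
    renameVars e.symm (renameVars e β) = β := by
  funext d
  show MvPowerSeries.coeff (R := R') (Finsupp.equivMapDomain e.symm _) β = β d
  rw [Equiv.symm_symm, equivMapDomain_equivMapDomain]
  rfl

end AuxD

section AuxD2
variable {σ'' : Type*} {R' : Type*} [CommRing R']

lemma renameVars_renameVars' (e : Equiv.Perm σ'') (β : MvPowerSeries σ'' R') :
    renameVars e (renameVars e.symm β) = β := by
  have := renameVars_renameVars e.symm β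
  simpa using this

lemma dom_renameVars (e : Equiv.Perm σ'') {d : σ'' →₀ ℕ} {β : MvPowerSeries σ'' R'}
    (h : Dom d β) : Dom (Finsupp.equivMapDomain e d) (renameVars e β) := by
  intro f hf
  rw [coeff_renameVars] at hf
  intro a
  rw [Finsupp.equivMapDomain_apply]
  calc d (e.symm a) ≤ (Finsupp.equivMapDomain e.symm f) (e.symm a) := h _ hf _
    _ = f a := by rw [Finsupp.equivMapDomain_apply, Equiv.symm_symm, Equiv.apply_symm_apply]

lemma renameVars_mem (e : Equiv.Perm σ'') {β : MvPowerSeries σ'' R'}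
    (h : β ∈ finVar σ'' R') : renameVars e β ∈ finVar σ'' R' := by
  classical
  obtain ⟨s, hs⟩ := h
  refine ⟨s.image e, fun f hf => ?_⟩
  rw [coeff_renameVars] at hf
  intro a ha
  have : e.symm a ∈ (Finsupp.equivMapDomain e.symm f).support := by
    rw [Finsupp.mem_support_iff, Finsupp.equivMapDomain_apply, Equiv.symm_symm,
      Equiv.apply_symm_apply]
    exact Finsupp.mem_support_iff.mp ha
  have := hs _ hf this
  exact Finset.mem_image.mpr ⟨e.symm a, this, Equiv.apply_symm_apply e a⟩

lemma finsupp_update_apply [DecidableEq σ''] (f : σ'' →₀ ℕ) (a : σ'') (b : ℕ) (x : σ'') :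
    (Finsupp.update f a b) x = if x = a then b else f x := by
  rw [Finsupp.coe_update]
  by_cases h : x = a
  · subst h; simp
  · simp [Function.update_of_ne h, h]

lemma coeff_substVarAt (v w : σ'') (β : MvPowerSeries σ'' R') (d : σ'' →₀ ℕ) :
    MvPowerSeries.coeff (R := R') d (substVarAt v w β) =
      if d v = 0 then
        ∑ a ∈ Finset.range (d w + 1),
          MvPowerSeries.coeff (R := R') (Finsupp.update (Finsupp.update d w (d w - a)) v a) β
      else 0 := rfl

lemma coeff_substZeroAt (v : σ'') (β : MvPowerSeries σ'' R') (d : σ'' →₀ ℕ) :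
    MvPowerSeries.coeff (R := R') d (substZeroAt v β) =
      if d v = 0 then MvPowerSeries.coeff (R := R') d β else 0 := rfl

lemma dom_substVarAt (v w : σ'') (hvw : v ≠ w) {d : σ'' →₀ ℕ} {β : MvPowerSeries σ'' R'}
    (h : Dom d β) :
    Dom (Finsupp.update (Finsupp.update d w (d w + d v)) v 0) (substVarAt v w β) := by
  classical
  intro f hf
  rw [coeff_substVarAt] at hf
  by_cases hfv : f v = 0
  · rw [if_pos hfv] at hf
    obtain ⟨a, ha, hca⟩ := Finset.exists_ne_zero_of_sum_ne_zero hf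
    rw [Finset.mem_range, Nat.lt_succ_iff] at ha
    have hle := h _ hca
    intro x
    rw [finsupp_update_apply, finsupp_update_apply]
    by_cases hxv : x = v
    · simp [hxv, hfv]
    · by_cases hxw : x = w
      · rw [if_neg hxv, if_pos hxw, hxw]
        have h1 : d w ≤ f w - a := by
          have := hle w
          rwa [finsupp_update_apply, if_neg (Ne.symm hvw), finsupp_update_apply, if_pos rfl]
            at this
        have h2 : d v ≤ a := by
          have := hle v
          rwa [finsupp_update_apply, if_pos rfl] at this
        omega
      · rw [if_neg hxv, if_neg hxw]
        have := hle x
        rwa [finsupp_update_apply, if_neg hxv, finsupp_update_apply, if_neg hxw] at this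
  · rw [if_neg hfv] at hf
    exact absurd rfl hf

lemma substVarAt_mem (v w : σ'') {β : MvPowerSeries σ'' R'}
    (h : β ∈ finVar σ'' R') : substVarAt v w β ∈ finVar σ'' R' := by
  classical
  obtain ⟨s, hs⟩ := h
  refine ⟨insert w s, fun f hf => ?_⟩
  rw [coeff_substVarAt] at hf
  by_cases hfv : f v = 0
  · rw [if_pos hfv] at hf
    obtain ⟨a, _, hca⟩ := Finset.exists_ne_zero_of_sum_ne_zero hf
    have hsupp := hs _ hca
    intro x hx
    by_cases hxw : x = w
    · simp [hxw]
    · refine Finset.mem_insert_of_mem (hsupp ?_)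
      have hxv : x ≠ v := fun hc => by
        rw [Finsupp.mem_support_iff, hc, hfv] at hx; exact hx rfl
      rw [Finsupp.mem_support_iff, finsupp_update_apply, if_neg hxv, finsupp_update_apply,
        if_neg hxw]
      exact Finsupp.mem_support_iff.mp hx
  · rw [if_neg hfv] at hf
    exact absurd rfl hf

end AuxD2

section Aux3
variable {σ'' : Type*} {R' : Type*} [CommRing R']

lemma substVarAt_monomial_mul (v w : σ'') (hvw : v ≠ w) (d : σ'' →₀ ℕ)
    (γ : MvPowerSeries σ'' R') (hdv : d v = 0) (hdw : 1 ≤ d w)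
    (hγ : ∀ g : σ'' →₀ ℕ, MvPowerSeries.coeff (R := R') g γ ≠ 0 → g v = 0) :
    substVarAt v w
        (MvPowerSeries.monomial (R := R') (Finsupp.update (Finsupp.update d w (d w - 1)) v 1) 1 * γ) =
      MvPowerSeries.monomial (R := R') d 1 * γ := by
  classical
  set d' : σ'' →₀ ℕ := Finsupp.update (Finsupp.update d w (d w - 1)) v 1 with hd'
  have hd'app : ∀ x, d' x = if x = v then 1 else if x = w then d w - 1 else d x := by
    intro x
    rw [hd', finsupp_update_apply, finsupp_update_apply]
  apply MvPowerSeries.ext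
  intro e
  rw [coeff_substVarAt, MvPowerSeries.coeff_monomial_mul]
  by_cases hev : e v = 0
  · rw [if_pos hev]
    have hterm : ∀ a, MvPowerSeries.coeff (R := R')
        (Finsupp.update (Finsupp.update e w (e w - a)) v a)
        (MvPowerSeries.monomial (R := R') d' 1 * γ) =
        if a = 1 then (if d' ≤ Finsupp.update (Finsupp.update e w (e w - 1)) v 1 then
          MvPowerSeries.coeff (R := R') (Finsupp.update (Finsupp.update e w (e w - 1)) v 1 - d') γ
          else 0) else 0 := by
      intro a
      rw [MvPowerSeries.coeff_monomial_mul]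
      by_cases ha : a = 1
      · subst ha; rw [if_pos rfl, one_mul]
      · rw [if_neg ha]
        set f := Finsupp.update (Finsupp.update e w (e w - a)) v a with hfdef
        have hfv : f v = a := by rw [hfdef, finsupp_update_apply, if_pos rfl]
        by_cases hle : d' ≤ f
        · rw [if_pos hle, one_mul]
          apply not_ne_iff.mp
          intro hne
          have := hγ _ hne
          rw [Finsupp.tsub_apply, hfv, hd'app, if_pos rfl] at this
          have h1 : 1 ≤ a := by
            have := hle v
            rwa [hd'app, if_pos rfl, hfv] at this
          omega
        · rw [if_neg hle]
    rw [Finset.sum_congr rfl (fun a _ => hterm a)]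
    by_cases hew : e w = 0
    · have hnotle : ¬ d ≤ e := fun hc => by have := hc w; omega
      rw [if_neg hnotle, hew]
      simp
    · rw [Finset.sum_ite_eq' (Finset.range (e w + 1)) 1, if_pos (by
        rw [Finset.mem_range]; omega : 1 ∈ Finset.range (e w + 1))]
      have hiff : (d' ≤ Finsupp.update (Finsupp.update e w (e w - 1)) v 1) ↔ d ≤ e := by
        constructor
        · intro hc x
          have := hc x
          simp only [hd'app, finsupp_update_apply] at this
          by_cases hxv : x = v
          · subst hxv; simp [hdv, hev]
          · by_cases hxw : x = w
            · subst hxw; simp [hxv] at this; omega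
            · simp [hxv, hxw] at this; omega
        · intro hc x
          have := hc x
          simp only [hd'app, finsupp_update_apply]
          by_cases hxv : x = v
          · simp [hxv]
          · by_cases hxw : x = w
            · subst hxw; simp [hxv]; omega
            · simp [hxv, hxw]; omega
      by_cases hde : d ≤ e
      · rw [if_pos (hiff.mpr hde), if_pos hde, one_mul]
        have heq : Finsupp.update (Finsupp.update e w (e w - 1)) v 1 - d' = e - d := by
          ext x
          have h3 := hde w
          simp only [Finsupp.tsub_apply, hd'app, finsupp_update_apply]
          by_cases hxv : x = v
          · subst hxv; simp [hdv, hev]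
          · by_cases hxw : x = w
            · subst hxw; simp [hxv]; omega
            · simp [hxv, hxw]
        rw [heq]
      · rw [if_neg (fun hc => hde (hiff.mp hc)), if_neg hde]
  · rw [if_neg hev]
    by_cases hde : d ≤ e
    · rw [if_pos hde, one_mul]
      symm
      apply not_ne_iff.mp
      intro hne
      have := hγ _ hne
      rw [Finsupp.tsub_apply, hdv] at this
      omega
    · rw [if_neg hde]

lemma monomial_mul_mem (d : σ'' →₀ ℕ) {γ : MvPowerSeries σ'' R'} (hγ : γ ∈ finVar σ'' R') :
    MvPowerSeries.monomial (R := R') d 1 * γ ∈ finVar σ'' R' := by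
  classical
  obtain ⟨s, hs⟩ := hγ
  refine ⟨s ∪ d.support, fun e he => ?_⟩
  rw [MvPowerSeries.coeff_monomial_mul] at he
  by_cases hle : d ≤ e
  · rw [if_pos hle, one_mul] at he
    intro x hx
    by_cases hdx : d x = 0
    · refine Finset.mem_union_left _ (hs _ he ?_)
      rw [Finsupp.mem_support_iff, Finsupp.tsub_apply, hdx, Nat.sub_zero]
      exact Finsupp.mem_support_iff.mp hx
    · exact Finset.mem_union_right _ (Finsupp.mem_support_iff.mpr hdx)
  · rw [if_neg hle] at he
    exact absurd rfl he

end Aux3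

section Aux4

lemma swap_moved_finite (a b : ℕ) : {x | Equiv.swap a b x ≠ x}.Finite := by
  apply Set.Finite.subset (Set.toFinite ({a, b} : Set ℕ))
  intro x hx
  simp only [Set.mem_setOf_eq] at hx
  by_contra h
  simp only [Set.mem_insert_iff, Set.mem_singleton_iff] at h
  push_neg at h
  exact hx (Equiv.swap_apply_of_ne_of_ne h.1 h.2)

lemma trans_moved_finite {e₁ e₂ : Equiv.Perm ℕ} (h₁ : {x | e₁ x ≠ x}.Finite)
    (h₂ : {x | e₂ x ≠ x}.Finite) : {x | (e₁.trans e₂) x ≠ x}.Finite := by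
  apply Set.Finite.subset (h₁.union h₂)
  intro x hx
  simp only [Set.mem_setOf_eq, Equiv.trans_apply] at hx
  by_contra h
  simp only [Set.mem_union, Set.mem_setOf_eq] at h
  push_neg at h
  rw [h.1, h.2] at hx
  exact hx rfl

lemma symm_moved_finite {e : Equiv.Perm ℕ} (h : {x | e x ≠ x}.Finite) :
    {x | e.symm x ≠ x}.Finite := by
  apply Set.Finite.subset (h.image e.symm)
  intro x hx
  simp only [Set.mem_setOf_eq] at hx
  exact ⟨e x, fun hc => hx (by nth_rewrite 1 [← e.injective hc]; exact e.symm_apply_apply x),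
    e.symm_apply_apply x⟩

lemma blockPerm_apply {r : ℕ} (i : Fin r) (σ : Equiv.Perm ℕ) (p : Fin r × ℕ) :
    blockPerm i σ p = (p.1, if p.1 = i then σ p.2 else p.2) := rfl

lemma blockPerm_symm_apply {r : ℕ} (i : Fin r) (σ : Equiv.Perm ℕ) (p : Fin r × ℕ) :
    (blockPerm i σ).symm p = (p.1, if p.1 = i then σ.symm p.2 else p.2) := rfl

lemma embDomain_blockVar_apply {r : ℕ} (i : Fin r) (d : ℕ →₀ ℕ) (i' : Fin r) (k : ℕ) :
    Finsupp.embDomain (blockVar i) d (i', k) = if i' = i then d k else 0 := by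
  by_cases h : i' = i
  · subst h
    rw [if_pos rfl]
    exact Finsupp.embDomain_apply_self (blockVar i') d k
  · rw [if_neg h, Finsupp.embDomain_notin_range]
    rintro ⟨k', hk'⟩
    exact h (congrArg Prod.fst hk'.symm)

end Aux4

section Main
variable {r : ℕ} {A : Fin r → Type*} [∀ i, CommRing (A i)] {B : Type*} [CommRing B]

lemma single_var_step
    (H : (∀ i, finVar ℕ (A i)) → finVar (Fin r × ℕ) B)
    (hH0 : ∀ α : ∀ i, finVar ℕ (A i), (∃ i, α i = 0) → H α = 0)
    (hHrename : ∀ (i : Fin r) (σ : Equiv.Perm ℕ), {x | σ x ≠ x}.Finite →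
      ∀ (α : ∀ i, finVar ℕ (A i)) (β : finVar ℕ (A i)),
        (β : MvPowerSeries ℕ (A i)) = renameVars σ ↑(α i) →
        (H (Function.update α i β) : MvPowerSeries (Fin r × ℕ) B) =
          renameVars (blockPerm i σ) ↑(H α))
    (hHeps : ∀ (i : Fin r) (α : ∀ i, finVar ℕ (A i)) (β : finVar ℕ (A i)),
        (β : MvPowerSeries ℕ (A i)) = substZeroAt 0 ↑(α i) →
        (H (Function.update α i β) : MvPowerSeries (Fin r × ℕ) B) =
          substZeroAt (i, 0) ↑(H α))
    (i : Fin r) (j : ℕ) (α : ∀ i, finVar ℕ (A i))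
    (h : Dom (Finsupp.single j 1) (α i : MvPowerSeries ℕ (A i)))
    (f : (Fin r × ℕ) →₀ ℕ) (hf : MvPowerSeries.coeff (R := B) f ↑(H α) ≠ 0) :
    1 ≤ f (i, j) := by
  classical
  set σ : Equiv.Perm ℕ := Equiv.swap 0 j with hσ
  have hσsymm : σ.symm = σ := Equiv.symm_swap 0 j
  have membβ : renameVars σ ↑(α i) ∈ finVar ℕ (A i) := renameVars_mem σ (α i).2
  set β : finVar ℕ (A i) := ⟨renameVars σ ↑(α i), membβ⟩ with hβ
  have h1 := hHrename i σ (swap_moved_finite 0 j) α β rfl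
  have hz : ((0 : finVar ℕ (A i)) : MvPowerSeries ℕ (A i)) =
      substZeroAt 0 ((Function.update α i β i : finVar ℕ (A i)) : MvPowerSeries ℕ (A i)) := by
    rw [Function.update_self, ZeroMemClass.coe_zero]
    apply MvPowerSeries.ext
    intro e
    rw [coeff_substZeroAt, map_zero]
    split_ifs with he
    · symm
      apply not_ne_iff.mp
      intro hne
      have hcr : MvPowerSeries.coeff (R := (A i)) (Finsupp.equivMapDomain σ.symm e) ↑(α i) ≠ 0 := hne
      have hle := h _ hcr
      rw [Finsupp.single_le_iff, Finsupp.equivMapDomain_apply, hσsymm, hσ,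
        Equiv.symm_swap, Equiv.swap_apply_right, he] at hle
      omega
    · rfl
  have h2 := hHeps i (Function.update α i β) 0 hz
  rw [Function.update_idem] at h2
  have h3 : H (Function.update α i 0) = 0 := hH0 _ ⟨i, Function.update_self i 0 α⟩
  rw [h3, ZeroMemClass.coe_zero, h1] at h2
  by_contra hlt
  have hfij : f (i, j) = 0 := by omega
  set g : (Fin r × ℕ) →₀ ℕ := Finsupp.equivMapDomain (blockPerm i σ) f with hg
  have hzg := congrArg (fun φ => MvPowerSeries.coeff (R := B) g φ) h2
  simp only [map_zero] at hzg
  rw [coeff_substZeroAt] at hzg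
  have hgi0 : g (i, 0) = 0 := by
    rw [hg, Finsupp.equivMapDomain_apply, blockPerm_symm_apply]
    simp only [if_pos rfl]
    rw [hσsymm, hσ, Equiv.swap_apply_left]
    exact hfij
  rw [if_pos hgi0] at hzg
  have : MvPowerSeries.coeff (R := B) g (renameVars (blockPerm i σ) ↑(H α)) =
      MvPowerSeries.coeff (R := B) f ↑(H α) := by
    rw [coeff_renameVars, hg, equivMapDomain_equivMapDomain]
  rw [this] at hzg
  exact hf hzg.symm

end Main

section Main2
variable {r : ℕ} {A : Fin r → Type*} [∀ i, CommRing (A i)] {B : Type*} [CommRing B]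

lemma block_dom
    (H : (∀ i, finVar ℕ (A i)) → finVar (Fin r × ℕ) B)
    (hH0 : ∀ α : ∀ i, finVar ℕ (A i), (∃ i, α i = 0) → H α = 0)
    (hHrename : ∀ (i : Fin r) (σ : Equiv.Perm ℕ), {x | σ x ≠ x}.Finite →
      ∀ (α : ∀ i, finVar ℕ (A i)) (β : finVar ℕ (A i)),
        (β : MvPowerSeries ℕ (A i)) = renameVars σ ↑(α i) →
        (H (Function.update α i β) : MvPowerSeries (Fin r × ℕ) B) =
          renameVars (blockPerm i σ) ↑(H α))
    (hHeps : ∀ (i : Fin r) (α : ∀ i, finVar ℕ (A i)) (β : finVar ℕ (A i)),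
        (β : MvPowerSeries ℕ (A i)) = substZeroAt 0 ↑(α i) →
        (H (Function.update α i β) : MvPowerSeries (Fin r × ℕ) B) =
          substZeroAt (i, 0) ↑(H α))
    (hHdelta : ∀ (i : Fin r) (α : ∀ i, finVar ℕ (A i)) (β : finVar ℕ (A i)),
        (β : MvPowerSeries ℕ (A i)) = substVarAt 0 1 ↑(α i) →
        (H (Function.update α i β) : MvPowerSeries (Fin r × ℕ) B) =
          substVarAt (i, 0) (i, 1) ↑(H α)) :
    ∀ (m : ℕ) (i : Fin r) (d : ℕ →₀ ℕ), (∑ x ∈ d.support, (d x - 1)) = m →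
      ∀ α : ∀ i, finVar ℕ (A i), Dom d (α i : MvPowerSeries ℕ (A i)) →
      Dom (Finsupp.embDomain (blockVar i) d) (H α : MvPowerSeries (Fin r × ℕ) B) := by
  classical
  intro m
  induction m using Nat.strong_induction_on with
  | _ m IH =>
    intro i d hm α hdom f hf
    by_cases hsq : ∀ x ∈ d.support, d x = 1
    · -- squarefree case
      intro p
      obtain ⟨i', k⟩ := p
      rw [embDomain_blockVar_apply]
      by_cases hi' : i' = i
      · rw [if_pos hi']
        subst hi'
        by_cases hk : k ∈ d.support
        · rw [hsq k hk]
          refine single_var_step H hH0 hHrename hHeps i' k α ?_ f hf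
          intro e he
          rw [Finsupp.single_le_iff]
          have := hdom e he k
          rw [hsq k hk] at this
          exact this
        · rw [Finsupp.notMem_support_iff.mp hk]
          exact Nat.zero_le _
      · rw [if_neg hi']
        exact Nat.zero_le _
    · -- there is a variable of exponent ≥ 2
      push_neg at hsq
      obtain ⟨j, hjsupp, hj1⟩ := hsq
      have hdj : 2 ≤ d j := by
        have := Finsupp.mem_support_iff.mp hjsupp
        omega
      obtain ⟨s, hs⟩ := (α i).2
      set v : ℕ := (s ∪ d.support ∪ {1}).sup id + 1 with hv
      have hmemv : ∀ x ∈ (s ∪ d.support ∪ {1} : Finset ℕ), x < v := by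
        intro x hx
        have := Finset.le_sup (f := id) hx
        simp only [id] at this
        omega
      have hvs : v ∉ s := fun hc =>
        lt_irrefl v (hmemv v (Finset.mem_union_left _ (Finset.mem_union_left _ hc)))
      have hvd : v ∉ d.support := fun hc =>
        lt_irrefl v (hmemv v (Finset.mem_union_left _ (Finset.mem_union_right _ hc)))
      have hv1 : 1 < v :=
        hmemv 1 (Finset.mem_union_right _ (Finset.mem_singleton_self 1))
      have hvj : v ≠ j := fun hc => hvd (hc ▸ hjsupp)
      set π : Equiv.Perm ℕ := (Equiv.swap 0 v).trans (Equiv.swap 1 j) with hπ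
      have hπ0 : π 0 = v := by
        rw [hπ, Equiv.trans_apply, Equiv.swap_apply_left]
        exact Equiv.swap_apply_of_ne_of_ne (by omega) hvj
      have hπ1 : π 1 = j := by
        rw [hπ, Equiv.trans_apply,
          Equiv.swap_apply_of_ne_of_ne (by omega : (1:ℕ) ≠ 0) (by omega : (1:ℕ) ≠ v),
          Equiv.swap_apply_left]
      have hπfin : {x | π x ≠ x}.Finite :=
        trans_moved_finite (swap_moved_finite 0 v) (swap_moved_finite 1 j)
      have hπs0 : π.symm v = 0 := by rw [← hπ0, Equiv.symm_apply_apply]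
      have hπs1 : π.symm j = 1 := by rw [← hπ1, Equiv.symm_apply_apply]
      -- transformed series and monomial
      set at_ : MvPowerSeries ℕ (A i) := renameVars π.symm ↑(α i) with hat
      set dt : ℕ →₀ ℕ := Finsupp.equivMapDomain π.symm d with hdt
      have hdtapp : ∀ k, dt k = d (π k) := fun k => by
        rw [hdt, Finsupp.equivMapDomain_apply, Equiv.symm_symm]
      have hdt0 : dt 0 = 0 := by
        rw [hdtapp, hπ0]
        exact Finsupp.notMem_support_iff.mp hvd
      have hdt1 : dt 1 = d j := by rw [hdtapp, hπ1]
      have hdomt : Dom dt at_ := dom_renameVars π.symm hdom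
      have hat0free : ∀ g : ℕ →₀ ℕ, MvPowerSeries.coeff (R := (A i)) g at_ ≠ 0 → g 0 = 0 := by
        intro g hg
        by_contra hg0
        have hco : MvPowerSeries.coeff (R := (A i)) (Finsupp.equivMapDomain π g) ↑(α i) ≠ 0 := by
          rw [hat, coeff_renameVars, Equiv.symm_symm] at hg
          exact hg
        have hsup := hs _ hco
        have hvmem : v ∈ (Finsupp.equivMapDomain π g).support := by
          rw [Finsupp.mem_support_iff, Finsupp.equivMapDomain_apply, hπs0]
          exact hg0
        exact hvs (hsup hvmem)
      set gt : MvPowerSeries ℕ (A i) := shiftBy dt at_ with hgt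
      have hateq : at_ = MvPowerSeries.monomial (R := (A i)) dt 1 * gt := eq_monomial_mul_shiftBy hdomt
      have hgt0free : ∀ g : ℕ →₀ ℕ, MvPowerSeries.coeff (R := (A i)) g gt ≠ 0 → g 0 = 0 := by
        intro g hg
        have := hat0free (g + dt) hg
        rw [Finsupp.add_apply, hdt0] at this
        omega
      have hatmem : at_ ∈ finVar ℕ (A i) := renameVars_mem π.symm (α i).2
      have hgtmem : gt ∈ finVar ℕ (A i) := by
        obtain ⟨s2, hs2⟩ := hatmem
        refine ⟨s2, fun g hg => ?_⟩
        have := hs2 (g + dt) hg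
        intro x hx
        refine this ?_
        rw [Finsupp.mem_support_iff, Finsupp.add_apply]
        have := Finsupp.mem_support_iff.mp hx
        omega
      set dt' : ℕ →₀ ℕ := Finsupp.update (Finsupp.update dt 1 (dt 1 - 1)) 0 1 with hdt'
      set at' : MvPowerSeries ℕ (A i) := MvPowerSeries.monomial (R := (A i)) dt' 1 * gt with hat'
      have hsub : substVarAt 0 1 at' = at_ := by
        rw [hat', hdt', hateq]
        exact substVarAt_monomial_mul 0 1 (by omega) dt gt hdt0 (by omega) hgt0free
      have hat'mem : at' ∈ finVar ℕ (A i) := monomial_mul_mem dt' hgtmem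
      set αv : MvPowerSeries ℕ (A i) := renameVars π at' with hαv
      have hαvmem : αv ∈ finVar ℕ (A i) := renameVars_mem π hat'mem
      set d' : ℕ →₀ ℕ := Finsupp.equivMapDomain π dt' with hd'
      have hdomv : Dom d' αv := dom_renameVars π (dom_of_eq_monomial_mul hat')
      have hd'app : ∀ k, d' k = dt' (π.symm k) := fun k => by
        rw [hd', Finsupp.equivMapDomain_apply]
      have hdt'app : ∀ k, dt' k = if k = 0 then 1 else if k = 1 then dt 1 - 1 else dt k :=
        fun k => by rw [hdt', finsupp_update_apply, finsupp_update_apply]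
      have hd'v : d' v = 1 := by rw [hd'app, hπs0, hdt'app]; simp
      have hd'j : d' j = d j - 1 := by
        rw [hd'app, hπs1, hdt'app, hdt1]
        simp
      have hd'k : ∀ k, k ≠ v → k ≠ j → d' k = d k := by
        intro k hkv hkj
        have h0 : π.symm k ≠ 0 := fun hc => hkv (by rw [← hπ0, ← hc, Equiv.apply_symm_apply])
        have h1 : π.symm k ≠ 1 := fun hc => hkj (by rw [← hπ1, ← hc, Equiv.apply_symm_apply])
        rw [hd'app, hdt'app, if_neg h0, if_neg h1, hdtapp, Equiv.apply_symm_apply]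
      -- the measure decreases
      have hsupp' : d'.support ⊆ insert v d.support := by
        intro x hx
        by_cases hxv : x = v
        · subst hxv
          exact Finset.mem_insert_self v _
        · by_cases hxj : x = j
          · exact Finset.mem_insert_of_mem (by rw [hxj]; exact hjsupp)
          · refine Finset.mem_insert_of_mem ?_
            rw [Finsupp.mem_support_iff] at hx ⊢
            rwa [hd'k x hxv hxj] at hx
      have hmeas : (∑ x ∈ d'.support, (d' x - 1)) < m := by
        have h1 : (∑ x ∈ d'.support, (d' x - 1)) = ∑ x ∈ insert v d.support, (d' x - 1) := by
          refine Finset.sum_subset hsupp' fun x _ hx => ?_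
          rw [Finsupp.notMem_support_iff.mp hx]
          rfl
        rw [h1, Finset.sum_insert hvd, hd'v]
        simp only [Nat.sub_self, zero_add]
        rw [← hm]
        refine Finset.sum_lt_sum (fun x hxs => ?_) ⟨j, hjsupp, ?_⟩
        · by_cases hxj : x = j
          · rw [hxj, hd'j]; omega
          · rw [hd'k x (fun hc => hvd (hc ▸ hxs)) hxj]
        · rw [hd'j]; omega
      -- apply the induction hypothesis
      have hIH : Dom (Finsupp.embDomain (blockVar i) d')
          (H (Function.update α i ⟨αv, hαvmem⟩) : MvPowerSeries (Fin r × ℕ) B) := by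
        refine IH _ hmeas i d' rfl _ ?_
        rw [Function.update_self]
        exact hdomv
      -- the chain of equivariances
      have hβ1eq : renameVars π.symm αv = at' := by rw [hαv, renameVars_renameVars]
      have hβ1mem : renameVars π.symm αv ∈ finVar ℕ (A i) := renameVars_mem _ hαvmem
      have e1 := hHrename i π.symm (symm_moved_finite hπfin) (Function.update α i ⟨αv, hαvmem⟩)
        ⟨renameVars π.symm αv, hβ1mem⟩ (by rw [Function.update_self])
      rw [Function.update_idem] at e1
      have e2 := hHdelta i (Function.update α i ⟨renameVars π.symm αv, hβ1mem⟩) ⟨at_, hatmem⟩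
        (by rw [Function.update_self]; rw [show ((⟨renameVars π.symm αv, hβ1mem⟩ : finVar ℕ (A i)) :
            MvPowerSeries ℕ (A i)) = at' from hβ1eq, hsub])
      rw [Function.update_idem] at e2
      have e3 := hHrename i π hπfin (Function.update α i ⟨at_, hatmem⟩)
        ⟨renameVars π at_, renameVars_mem π hatmem⟩ (by rw [Function.update_self])
      rw [Function.update_idem] at e3
      have hfinal : renameVars π at_ = ↑(α i) := by rw [hat, renameVars_renameVars']
      have htup : Function.update α i ⟨renameVars π at_, renameVars_mem π hatmem⟩ = α := by
        rw [show (⟨renameVars π at_, renameVars_mem π hatmem⟩ : finVar ℕ (A i)) = α i from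
          Subtype.ext hfinal, Function.update_eq_self]
      rw [htup] at e3
      -- assemble
      have hHeq : (H α : MvPowerSeries (Fin r × ℕ) B) =
          renameVars (blockPerm i π) (substVarAt (i, 0) (i, 1)
            (renameVars (blockPerm i π.symm)
              (H (Function.update α i ⟨αv, hαvmem⟩) : MvPowerSeries (Fin r × ℕ) B))) := by
        rw [← e1, ← e2, ← e3]
      -- transport the domination
      have D2 := dom_renameVars (blockPerm i π.symm) hIH
      have D3 := dom_substVarAt (i, (0:ℕ)) (i, 1) (by simp) D2
      have D4 := dom_renameVars (blockPerm i π) D3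
      rw [← hHeq] at D4
      -- identify the monomial
      set m1 : (Fin r × ℕ) →₀ ℕ :=
        Finsupp.equivMapDomain (blockPerm i π.symm) (Finsupp.embDomain (blockVar i) d') with hm1
      have hm1app : ∀ p : Fin r × ℕ, m1 p = if p.1 = i then d' (π p.2) else 0 := by
        intro p
        rw [hm1, Finsupp.equivMapDomain_apply, blockPerm_symm_apply]
        by_cases hp : p.1 = i
        · rw [if_pos hp, if_pos hp, Equiv.symm_symm]
          rw [embDomain_blockVar_apply, if_pos hp]
        · rw [if_neg hp, if_neg hp, embDomain_blockVar_apply, if_neg hp]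
      have hm1app' : ∀ k : ℕ, m1 (i, k) = d' (π k) := fun k => by
        rw [hm1app]
        simp
      have hmono : Finsupp.equivMapDomain (blockPerm i π)
          (Finsupp.update (Finsupp.update m1 (i, 1) (m1 (i, 1) + m1 (i, 0))) (i, 0) 0) =
          Finsupp.embDomain (blockVar i) d := by
        ext p
        obtain ⟨i', k⟩ := p
        rw [Finsupp.equivMapDomain_apply, blockPerm_symm_apply, embDomain_blockVar_apply]
        by_cases hi' : i' = i
        · rw [if_pos hi', if_pos hi']
          subst hi'
          by_cases hkv : k = v
          · rw [hkv, hπs0, finsupp_update_apply, if_pos rfl]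
            rw [Finsupp.notMem_support_iff.mp hvd]
          · by_cases hkj : k = j
            · rw [hkj, hπs1, finsupp_update_apply,
                if_neg (by simp : ((i', (1:ℕ)) : Fin r × ℕ) ≠ (i', 0)),
                finsupp_update_apply, if_pos rfl, hm1app', hm1app', hπ0, hπ1, hd'v, hd'j]
              omega
            · have h0 : π.symm k ≠ 0 := fun hc =>
                hkv (by rw [← hπ0, ← hc, Equiv.apply_symm_apply])
              have h1 : π.symm k ≠ 1 := fun hc =>
                hkj (by rw [← hπ1, ← hc, Equiv.apply_symm_apply])
              rw [finsupp_update_apply, if_neg (by simp [h0] : ((i', π.symm k) : Fin r × ℕ) ≠ (i', 0)),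
                finsupp_update_apply, if_neg (by simp [h1] : ((i', π.symm k) : Fin r × ℕ) ≠ (i', 1)),
                hm1app', Equiv.apply_symm_apply, hd'k k hkv hkj]
        · rw [if_neg hi', if_neg hi']
          rw [finsupp_update_apply, if_neg (by simp [hi'] : ((i', k) : Fin r × ℕ) ≠ (i, 0)),
            finsupp_update_apply, if_neg (by simp [hi'] : ((i', k) : Fin r × ℕ) ≠ (i, 1)),
            hm1app]
          rw [if_neg hi']
      rw [hmono] at D4
      exact D4 f hf

end Main2

lemma mapDomain_snd_apply {r : ℕ} (g : (Fin r × ℕ) →₀ ℕ) (k : ℕ) :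
    Finsupp.mapDomain Prod.snd g k = ∑ i : Fin r, g (i, k) := by
  classical
  rw [Finsupp.mapDomain, Finsupp.sum_apply, Finsupp.sum]
  rw [Finset.sum_congr rfl (fun p _ => Finsupp.single_apply)]
  rw [← Finset.sum_filter]
  rw [show (∑ i : Fin r, g (i, k)) =
      ∑ p ∈ Finset.univ.image (fun i : Fin r => ((i, k) : Fin r × ℕ)), g p from
    (Finset.sum_image (fun a _ b _ hab => by simpa using hab)).symm]
  refine Finset.sum_subset ?_ ?_
  · intro p hp
    obtain ⟨hps, hpk⟩ := Finset.mem_filter.mp hp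
    refine Finset.mem_image.mpr ⟨p.1, Finset.mem_univ _, ?_⟩
    rw [← hpk]
  · intro p hp hnf
    obtain ⟨i', _, hpi⟩ := Finset.mem_image.mp hp
    by_contra hgz
    refine hnf (Finset.mem_filter.mpr ⟨Finsupp.mem_support_iff.mpr hgz, ?_⟩)
    rw [← hpi]
/-- Let `H : R_{A₁} × ⋯ × R_{A_r} → R_B^{(r)}` be an admissible `r`-nary transformation
and let `Δ : R_B^{(r)} → R_B` be induced by the variable substitution `z(i)_j ↦ z_j`
(identifying the `r` blocks of variables). If `z^{d i}` divides `α i` for each `i`,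
then the monomial `z^{d 1 + ⋯ + d r}` divides `Δ (H α)`. -/
theorem admissible_poly_diagonal_preserves_monomial_divisibility
    {r : ℕ} (hr : 1 ≤ r) {A : Fin r → Type*} [∀ i, CommRing (A i)]
    {B : Type*} [CommRing B]
    (H : (∀ i, finVar ℕ (A i)) → finVar (Fin r × ℕ) B)
    (hH0 : ∀ α : ∀ i, finVar ℕ (A i), (∃ i, α i = 0) → H α = 0)
    (hHrename : ∀ (i : Fin r) (σ : Equiv.Perm ℕ), {x | σ x ≠ x}.Finite →
      ∀ (α : ∀ i, finVar ℕ (A i)) (β : finVar ℕ (A i)),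
        (β : MvPowerSeries ℕ (A i)) = renameVars σ ↑(α i) →
        (H (Function.update α i β) : MvPowerSeries (Fin r × ℕ) B) =
          renameVars (blockPerm i σ) ↑(H α))
    (hHeps : ∀ (i : Fin r) (α : ∀ i, finVar ℕ (A i)) (β : finVar ℕ (A i)),
        (β : MvPowerSeries ℕ (A i)) = substZeroAt 0 ↑(α i) →
        (H (Function.update α i β) : MvPowerSeries (Fin r × ℕ) B) =
          substZeroAt (i, 0) ↑(H α))
    (hHdelta : ∀ (i : Fin r) (α : ∀ i, finVar ℕ (A i)) (β : finVar ℕ (A i)),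
        (β : MvPowerSeries ℕ (A i)) = substVarAt 0 1 ↑(α i) →
        (H (Function.update α i β) : MvPowerSeries (Fin r × ℕ) B) =
          substVarAt (i, 0) (i, 1) ↑(H α))
    (d : Fin r → (ℕ →₀ ℕ)) (α : ∀ i, finVar ℕ (A i))
    (hdvd : ∀ i, MvPowerSeries.monomial (R := A i) (d i) 1 ∣ (α i : MvPowerSeries ℕ (A i))) :
    MvPowerSeries.monomial (R := B) (∑ i : Fin r, d i) 1 ∣
      collapseBlocks (H α : MvPowerSeries (Fin r × ℕ) B) := by
  classical
  apply dvd_of_dom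
  intro e he
  have hX : ∀ i : Fin r, Dom (Finsupp.embDomain (blockVar i) (d i))
      ((H α : finVar (Fin r × ℕ) B) : MvPowerSeries (Fin r × ℕ) B) := fun i =>
    block_dom H hH0 hHrename hHeps hHdelta _ i (d i) rfl α (dom_of_dvd (hdvd i))
  rw [MvPowerSeries.coeff_apply] at he
  unfold collapseBlocks at he
  rw [Finset.filter_congr_decidable] at he
  have he' : (∑ g ∈ (Finset.Iic (∑ i : Fin r, Finsupp.embDomain (blockVar i) e)).filter
        (fun g : (Fin r × ℕ) →₀ ℕ => Finsupp.mapDomain Prod.snd g = e),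
      MvPowerSeries.coeff (R := B) g
        ((H α : finVar (Fin r × ℕ) B) : MvPowerSeries (Fin r × ℕ) B)) ≠ 0 := he
  obtain ⟨g, hgmem, hgne⟩ := Finset.exists_ne_zero_of_sum_ne_zero he'
  have hgmap : Finsupp.mapDomain Prod.snd g = e := (Finset.mem_filter.mp hgmem).2
  intro k
  have h1 : ((∑ i : Fin r, d i) : ℕ →₀ ℕ) k = ∑ i : Fin r, d i k := by
    rw [Finsupp.finset_sum_apply]
  rw [h1, ← hgmap, mapDomain_snd_apply]
  exact Finset.sum_le_sum fun i _ => by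
    have := hX i g hgne (i, k)
    rwa [embDomain_blockVar_apply, if_pos rfl] at this
end
end
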